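/- arXiv:1911.11187 — 4 statements merged into one kernel-verified Lean document; each statement's English description precedes it below -/
import Mathlib

section
/- Let (X, μ) and (Y, ν) be σ-finite measure spaces, let q < 0, and let F : X × Y → [0, ∞] be a measurable function. Then the reverse integral Minkowski inequality holds: (∫_X (∫_Y F(x,y) dν(y))^q dμ(x))^{1/q} ≥ ∫_Y (∫_X F(x,y)^q dμ(x))^{1/q} dν(y), where negative powers of 0 and ∞ are interpreted by the conventions 0^q = +∞ and (+∞)^q = 0 for q < 0 (as in extended-nonnegative-real rpow). -/
/-!
For `q < 0` and the conjugate exponent `q' = q / (q - 1) ∈ (0, 1)`, Hölder's inequality reverses: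
`‖f‖_q ‖g‖_{q'} ≤ ∫ f g`. Applied to `F(·, y)` for each `y` and integrated in `y` (Tonelli), it
gives `R ‖g‖_{q'} ≤ ∫ G g` for every `g ≥ 0`, where `G x = ∫ F(x, y) dν(y)` and `R` is the
right-hand side. Testing against `g = G ^ (q - 1)` on the sets where `G ≥ 1/n` and `μ` is finite
yields, by monotone convergence, `∫ G ^ q ≤ R ^ q`. If instead `G` vanishes on a set of positive
measure, testing against the indicator of that set forces `R = 0`.
-/

open MeasureTheory ENNReal

namespace ENNReal

theorem rpow_le_rpow_of_nonpos {x y : ℝ≥0∞} {z : ℝ} (hz : z ≤ 0) (h : x ≤ y) :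
    y ^ z ≤ x ^ z := by
  rw [← neg_neg z, rpow_neg y, rpow_neg x]
  exact ENNReal.inv_le_inv.mpr (rpow_le_rpow h (neg_nonneg.mpr hz))

theorem le_rpow_one_div_iff_of_neg {x y : ℝ≥0∞} {z : ℝ} (hz : z < 0) :
    x ≤ y ^ (1 / z) ↔ y ≤ x ^ z := by
  constructor <;> intro h
  · simpa [← rpow_mul, hz.ne] using rpow_le_rpow_of_nonpos hz.le h
  · simpa [← rpow_mul, hz.ne] using rpow_le_rpow_of_nonpos (one_div_neg.mpr hz).le h

theorem mul_rpow_sub_one {x : ℝ≥0∞} {z : ℝ} (hx : x ≠ 0) (hz : z < 0) :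
    x * x ^ (z - 1) = x ^ z := by
  rcases eq_or_ne x ⊤ with rfl | hx'
  · simp [top_rpow_of_neg hz, top_rpow_of_neg (by linarith : z - 1 < 0)]
  · conv_lhs => enter [1]; rw [← rpow_one x]
    rw [← rpow_add _ _ hx hx', add_sub_cancel]

end ENNReal

theorem Real.neg_conjugate_exponent {p q : ℝ} (hp : p < 0) (hpq : 1 / p + 1 / q = 1) :
    0 < q ∧ q < 1 ∧ p + q = p * q := by
  have hinv : 1 < 1 / q := by linarith [one_div_neg.mpr hp]
  have hq : 0 < q := one_div_pos.mp (by linarith)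
  refine ⟨hq, by rwa [lt_one_div one_pos hq, div_one] at hinv, ?_⟩
  rwa [div_add_div _ _ hp.ne hq.ne', div_eq_one_iff_eq (mul_ne_zero hp.ne hq.ne'), one_mul,
    mul_one, add_comm] at hpq

theorem ENNReal.lintegral_rpow_le_lintegral_mul_rpow_mul_of_neg {α : Type*}
    [MeasurableSpace α] (μ : Measure α) {p q : ℝ} (hp : p < 0) (hpq : 1 / p + 1 / q = 1)
    {f g : α → ℝ≥0∞} (hf : Measurable f) (hg : Measurable g)
    (hA : ∫⁻ a, f a ^ p ∂μ ≠ ⊤) (hI : ∫⁻ a, f a * g a ∂μ ≠ ⊤) :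
    ∫⁻ a, g a ^ q ∂μ ≤ (∫⁻ a, f a * g a ∂μ) ^ q * (∫⁻ a, f a ^ p ∂μ) ^ (1 - q) := by
  obtain ⟨hq, hq1, hsum⟩ := Real.neg_conjugate_exponent hp hpq
  have hexp : p * (1 - q) = -q := by linarith
  have hf0 : ∀ᵐ a ∂μ, f a ≠ 0 := by
    filter_upwards [ae_lt_top (hf.pow_const p) hA] with a ha h0
    simp [h0, zero_rpow_of_neg hp] at ha
  have hfg : ∀ᵐ a ∂μ, f a * g a ≠ ⊤ := (ae_lt_top (hf.mul hg) hI).mono fun _ h => h.ne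
  have hpt : ∀ᵐ a ∂μ, g a ^ q = (f a * g a) ^ q * (f a ^ p) ^ (1 - q) := by
    filter_upwards [hf0, hfg] with a ha0 hat
    rcases eq_or_ne (g a) 0 with hga | hga
    · simp [hga, zero_rpow_of_pos hq]
    have haT : f a ≠ ⊤ := fun h => hat (by simp [h, hga])
    rw [← rpow_mul, hexp, mul_rpow_of_nonneg _ _ hq.le, mul_comm (f a ^ q), mul_assoc,
      ← rpow_add _ _ ha0 haT, add_neg_cancel, rpow_zero, mul_one]
  rw [lintegral_congr_ae hpt]
  exact lintegral_mul_norm_pow_le (hf.mul hg).aemeasurable (hf.pow_const p).aemeasurable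
    hq.le (by linarith) (by ring)

theorem ENNReal.Lp_mul_Lq_le_lintegral_mul_of_neg {α : Type*} [MeasurableSpace α]
    (μ : Measure α) {p q : ℝ} (hp : p < 0) (hpq : 1 / p + 1 / q = 1) {f g : α → ℝ≥0∞}
    (hf : Measurable f) (hg : Measurable g) :
    (∫⁻ a, f a ^ p ∂μ) ^ (1 / p) * (∫⁻ a, g a ^ q ∂μ) ^ (1 / q) ≤ ∫⁻ a, f a * g a ∂μ := by
  obtain ⟨hq, hq1, -⟩ := Real.neg_conjugate_exponent hp hpq
  set A := ∫⁻ a, f a ^ p ∂μ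
  set I := ∫⁻ a, f a * g a ∂μ
  rcases eq_or_ne A ⊤ with hA | hA
  · rw [hA, top_rpow_of_neg (one_div_neg.mpr hp), zero_mul]
    exact zero_le
  rcases eq_or_ne I ⊤ with hI | hI
  · simp [hI]
  have holder := ENNReal.lintegral_rpow_le_lintegral_mul_rpow_mul_of_neg μ hp hpq hf hg hA hI
  rcases eq_or_ne A 0 with hA0 | hA0
  · have : ∫⁻ a, g a ^ q ∂μ = 0 := by
      simpa [A, hA0, zero_rpow_of_pos (sub_pos.mpr hq1)] using holder
    rw [this, zero_rpow_of_pos (one_div_pos.mpr hq), mul_zero]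
    exact zero_le
  have hexp : (1 - q) * (1 / q) = -(1 / p) := by
    rw [sub_mul, one_mul, mul_one_div_cancel hq.ne']; linarith
  calc A ^ (1 / p) * (∫⁻ a, g a ^ q ∂μ) ^ (1 / q)
      ≤ A ^ (1 / p) * (I ^ q * A ^ (1 - q)) ^ (1 / q) := by
        gcongr
    _ = I * (A ^ (1 / p) * A ^ (-(1 / p))) := by
        rw [mul_rpow_of_nonneg _ _ (one_div_pos.mpr hq).le, ← rpow_mul, ← rpow_mul, hexp,
          mul_one_div_cancel hq.ne', rpow_one]
        ring
    _ = I := by rw [← rpow_add _ _ hA0 hA, add_neg_cancel, rpow_zero, mul_one]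

theorem lintegral_eq_iSup_setLIntegral_spanningSets_inter {α : Type*} [MeasurableSpace α]
    {μ : Measure α} [SigmaFinite μ] {G : α → ℝ≥0∞} (hG : ∀ᵐ x ∂μ, G x ≠ 0) (f : α → ℝ≥0∞) :
    ∫⁻ x, f x ∂μ = ⨆ n : ℕ, ∫⁻ x in spanningSets μ n ∩ {x | (n : ℝ≥0∞)⁻¹ ≤ G x}, f x ∂μ := by
  have hmono : Monotone fun n : ℕ => {x | (n : ℝ≥0∞)⁻¹ ≤ G x} := fun m n hmn x hx =>
    le_trans (ENNReal.inv_le_inv.mpr (by exact_mod_cast hmn)) hx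
  have hunion : ⋃ n : ℕ, spanningSets μ n ∩ {x | (n : ℝ≥0∞)⁻¹ ≤ G x} = {x | G x ≠ 0} := by
    rw [Set.iUnion_inter_of_monotone (monotone_spanningSets μ) hmono, iUnion_spanningSets,
      Set.univ_inter]
    ext x
    simp only [Set.mem_iUnion, Set.mem_ofPred_eq]
    refine ⟨fun ⟨n, hn⟩ h0 => ?_, fun h => ?_⟩
    · simp [h0] at hn
    · obtain ⟨n, hn⟩ := ENNReal.exists_inv_nat_lt h
      exact ⟨n, hn.le⟩
  rw [← setLIntegral_iUnion_of_directed f ((monotone_spanningSets μ).inter hmono).directed_le,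
    hunion, Measure.restrict_eq_self_of_ae_mem (s := {x | G x ≠ 0}) hG]

section Duality

variable {α : Type*} [MeasurableSpace α] {μ : Measure α} {p q : ℝ} {G : α → ℝ≥0∞} {R : ℝ≥0∞}

theorem setLIntegral_rpow_le_of_forall_mul_le (hp : p < 0) (hpq : 1 / p + 1 / q = 1)
    (hR : ∀ g : α → ℝ≥0∞, Measurable g → R * (∫⁻ x, g x ^ q ∂μ) ^ (1 / q) ≤ ∫⁻ x, G x * g x ∂μ)
    (hG : Measurable G) {s : Set α} (hs : MeasurableSet s) (hGs : ∀ x ∈ s, G x ≠ 0)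
    (hfin : ∫⁻ x in s, G x ^ p ∂μ ≠ ⊤) :
    ∫⁻ x in s, G x ^ p ∂μ ≤ R ^ p := by
  obtain ⟨hq, -, hsum⟩ := Real.neg_conjugate_exponent hp hpq
  set B := ∫⁻ x in s, G x ^ p ∂μ with hB
  -- the equality case of the reverse Hölder inequality, truncated to `s`
  set g := s.indicator fun x => G x ^ (p - 1)
  have hgq : ∫⁻ x, g x ^ q ∂μ = B := by
    have hexp : (p - 1) * q = p := by linarith
    rw [hB, ← lintegral_indicator hs]
    congr 1 with x
    by_cases hx : x ∈ s <;> simp [g, hx, ← rpow_mul, hexp, zero_rpow_of_pos hq]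
  have hGg : ∫⁻ x, G x * g x ∂μ = B := by
    rw [hB, ← lintegral_indicator hs]
    congr 1 with x
    by_cases hx : x ∈ s
    · simp [g, hx, ENNReal.mul_rpow_sub_one (hGs x hx) hp]
    · simp [g, hx]
  rcases eq_or_ne B 0 with hB0 | hB0
  · rw [hB0]; exact zero_le
  have key := hR g ((hG.pow_const _).indicator hs)
  rw [hgq, hGg] at key
  rw [← ENNReal.le_rpow_one_div_iff_of_neg hp, ← ENNReal.mul_le_mul_iff_left
    (rpow_pos (pos_iff_ne_zero.mpr hB0) hfin).ne'
    (rpow_ne_top_of_nonneg (one_div_pos.mpr hq).le hfin), ← rpow_add _ _ hB0 hfin, hpq, rpow_one]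
  exact key

theorem eq_zero_of_forall_mul_le_of_measure_ne_zero [SigmaFinite μ] (hq : 0 < q)
    (hR : ∀ g : α → ℝ≥0∞, Measurable g → R * (∫⁻ x, g x ^ q ∂μ) ^ (1 / q) ≤ ∫⁻ x, G x * g x ∂μ)
    (hG : Measurable G) (hZ : μ {x | G x = 0} ≠ 0) :
    R = 0 := by
  obtain ⟨n, hn⟩ : ∃ n, μ (spanningSets μ n ∩ {x | G x = 0}) ≠ 0 := by
    by_contra! h
    rw [← measure_iUnion_null_iff, ← Set.iUnion_inter, iUnion_spanningSets, Set.univ_inter] at h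
    exact hZ h
  set s := spanningSets μ n ∩ {x | G x = 0}
  have hs : MeasurableSet s :=
    (measurableSet_spanningSets μ n).inter (hG (measurableSet_singleton 0))
  have hfin : μ s ≠ ⊤ :=
    ((measure_mono Set.inter_subset_left).trans_lt (measure_spanningSets_lt_top μ n)).ne
  have hgq : ∫⁻ x, s.indicator 1 x ^ q ∂μ = μ s := by
    rw [← lintegral_indicator_one hs]
    congr 1 with x
    by_cases hx : x ∈ s <;> simp [hx, zero_rpow_of_pos hq]
  have hGg : ∫⁻ x, G x * s.indicator 1 x ∂μ = 0 := by
    rw [← lintegral_zero]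
    congr 1 with x
    by_cases hx : x ∈ s
    · simp [hx, show G x = 0 from hx.2]
    · simp [hx]
  have key := hR (s.indicator 1) (measurable_one.indicator hs)
  rw [hgq, hGg, nonpos_iff_eq_zero, mul_eq_zero] at key
  exact key.resolve_right (rpow_pos (pos_iff_ne_zero.mpr hn) hfin).ne'

theorem le_rpow_lintegral_of_forall_mul_le [SigmaFinite μ] (hp : p < 0)
    (hpq : 1 / p + 1 / q = 1)
    (hR : ∀ g : α → ℝ≥0∞, Measurable g → R * (∫⁻ x, g x ^ q ∂μ) ^ (1 / q) ≤ ∫⁻ x, G x * g x ∂μ)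
    (hG : Measurable G) :
    R ≤ (∫⁻ x, G x ^ p ∂μ) ^ (1 / p) := by
  by_cases hZ : μ {x | G x = 0} = 0
  swap
  · rw [eq_zero_of_forall_mul_le_of_measure_ne_zero (Real.neg_conjugate_exponent hp hpq).1
      hR hG hZ]
    exact zero_le
  have hG0 : ∀ᵐ x ∂μ, G x ≠ 0 := by
    rw [ae_iff]; simpa using hZ
  rw [ENNReal.le_rpow_one_div_iff_of_neg hp, lintegral_eq_iSup_setLIntegral_spanningSets_inter hG0]
  refine iSup_le fun n => ?_
  set K := spanningSets μ n ∩ {x | (n : ℝ≥0∞)⁻¹ ≤ G x}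
  have hK : MeasurableSet K := (measurableSet_spanningSets μ n).inter (hG measurableSet_Ici)
  have hGK : ∀ x ∈ K, G x ≠ 0 := fun x hx h0 => by simpa [h0] using hx.2
  have hKfin : ∫⁻ x in K, G x ^ p ∂μ ≠ ⊤ := by
    refine ne_top_of_le_ne_top ?_
      (setLIntegral_mono' hK fun x hx => ENNReal.rpow_le_rpow_of_nonpos hp.le hx.2)
    rw [setLIntegral_const]
    exact mul_ne_top (by simp [rpow_eq_top_iff, hp.not_gt])
      ((measure_mono Set.inter_subset_left).trans_lt (measure_spanningSets_lt_top μ n)).ne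
  exact setLIntegral_rpow_le_of_forall_mul_le hp hpq hR hG hK hGK hKfin

end Duality

/-- Reverse integral Minkowski inequality for a negative exponent `q < 0`,
with integrals of `[0,∞]`-valued functions and `ENNReal.rpow` conventions
`0 ^ q = ∞`, `∞ ^ q = 0`. -/
theorem reverse_integral_minkowski
    {X Y : Type*} [MeasurableSpace X] [MeasurableSpace Y]
    (μ : Measure X) (ν : Measure Y) [SigmaFinite μ] [SigmaFinite ν]
    (q : ℝ) (hq : q < 0)
    (F : X × Y → ℝ≥0∞) (hF : Measurable F) :
    (∫⁻ x, (∫⁻ y, F (x, y) ∂ν) ^ q ∂μ) ^ (1 / q) ≥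
      ∫⁻ y, (∫⁻ x, F (x, y) ^ q ∂μ) ^ (1 / q) ∂ν := by
  have hconj : 1 / q + 1 / (q / (q - 1)) = 1 := by
    rw [one_div_div, ← add_div, add_sub_cancel, div_self hq.ne]
  refine le_rpow_lintegral_of_forall_mul_le hq hconj (fun g hg => ?_) hF.lintegral_prod_right'
  set C := (∫⁻ x, g x ^ (q / (q - 1)) ∂μ) ^ (1 / (q / (q - 1)))
  calc (∫⁻ y, (∫⁻ x, F (x, y) ^ q ∂μ) ^ (1 / q) ∂ν) * C
      = ∫⁻ y, (∫⁻ x, F (x, y) ^ q ∂μ) ^ (1 / q) * C ∂ν :=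
        (lintegral_mul_const'' _
          ((hF.pow_const q).lintegral_prod_left'.pow_const _).aemeasurable).symm
    _ ≤ ∫⁻ y, ∫⁻ x, F (x, y) * g x ∂μ ∂ν := lintegral_mono fun y =>
        ENNReal.Lp_mul_Lq_le_lintegral_mul_of_neg μ hq hconj (hF.comp measurable_prodMk_right) hg
    _ = ∫⁻ x, ∫⁻ y, F (x, y) * g x ∂ν ∂μ :=
        (lintegral_lintegral_swap (hF.mul (hg.comp measurable_fst)).aemeasurable).symm
    _ = ∫⁻ x, (∫⁻ y, F (x, y) ∂ν) * g x ∂μ := by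
        congr 1 with x
        exact lintegral_mul_const'' _ (hF.comp measurable_prodMk_left).aemeasurable
end

section
/- Let p ∈ (0,1), q < 0, and p' = p/(p-1). Let X be a metric space with a σ-finite Borel measure μ, fix a ∈ X, and let u, v : X → (0,∞) be measurable and locally integrable. If there is a constant C > 0 such that (∫_X (∫_{X∖B(a,d(x,a))} f dμ)^q u(x) dμ(x))^{1/q} ≥ C (∫_X f(x)^p v(x) dμ(x))^{1/p} for every measurable f : X → [0,∞], then for every x ≠ a one has (∫_{B(a,d(x,a))} u dμ)^{1/q} · (∫_{X∖B(a,d(x,a))} v^{1-p'} dμ)^{1/p'} ≥ C; in particular D₂ := inf_{x ≠ a} of this quantity satisfies D₂ ≥ C > 0. -/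
/-!
Test the inequality with `f = 𝟙_S · v^(1-p')`. Since `(1 - p') p + 1 = 1 - p'`, its right-hand side
is `C W^(1/p)` with `W = ∫_S v^(1-p')`, while every inner integral is at most `W`; as `q < 0` the
left-hand side is then at most `(W^q ∫_B u)^(1/q) = W (∫_B u)^(1/q)` for any set `B`. Dividing by
`W^(1/p)` gives `C ≤ W^(1/p') (∫_B u)^(1/q)` whenever `0 < W < ∞`, and `S = Bᶜ` is the claim.

The degenerate cases need `∫_X v^(1-p') < ∞` and `∫_B u < ∞`. The first follows by letting `S` run
through a σ-finite exhaustion of the measure `v^(1-p') μ`: otherwise `W^(1/p') → 0` would force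
`C = 0`. The second then follows from the bound with `S = X`.
-/

open MeasureTheory ENNReal Set Filter Topology

lemma ENNReal.rpow_le_rpow_of_nonpos_s4 {x y : ℝ≥0∞} {z : ℝ} (hz : z ≤ 0) (hxy : x ≤ y) :
    y ^ z ≤ x ^ z := by
  rw [← neg_neg z, rpow_neg x, rpow_neg y]
  exact ENNReal.inv_le_inv.2 (rpow_le_rpow hxy (neg_nonneg.2 hz))

lemma ENNReal.le_rpow_mul_rpow_of_mul_rpow_le {C W U : ℝ≥0∞} {p q : ℝ} (hq : q ≠ 0)
    (hW0 : W ≠ 0) (hWt : W ≠ ⊤) (h : C * W ^ (1 / p) ≤ (W ^ q * U) ^ (1 / q)) :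
    C ≤ W ^ (1 - 1 / p) * U ^ (1 / q) := by
  have hWq0 : W ^ q ≠ 0 := by simp [rpow_eq_zero_iff, hW0, hWt]
  have hWqt : W ^ q ≠ ⊤ := by simp [rpow_eq_top_iff, hW0, hWt]
  have hWp0 : W ^ (1 / p) ≠ 0 := by simp [rpow_eq_zero_iff, hW0, hWt]
  have hWpt : W ^ (1 / p) ≠ ⊤ := by simp [rpow_eq_top_iff, hW0, hWt]
  rw [mul_rpow_eq_ite, if_neg (by simp [hWq0, hWqt]), ← rpow_mul, mul_one_div_cancel hq,
    rpow_one] at h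
  rw [← ENNReal.mul_le_mul_iff_left hWp0 hWpt]
  calc C * W ^ (1 / p) ≤ W * U ^ (1 / q) := h
    _ = W ^ (1 - 1 / p) * U ^ (1 / q) * W ^ (1 / p) := by
      rw [mul_right_comm, ← rpow_add _ _ hW0 hWt, sub_add_cancel, rpow_one]

lemma MeasureTheory.lintegral_ne_zero_of_forall_pos {α : Type*} [MeasurableSpace α]
    {μ : Measure α} {f : α → ℝ≥0∞} (hf : Measurable f) (hpos : ∀ x, 0 < f x) (hμ : μ ≠ 0) :
    ∫⁻ x, f x ∂μ ≠ 0 := by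
  refine ((lintegral_pos_iff_support hf).2 ?_).ne'
  rwa [Function.support_eq_univ fun x => (hpos x).ne', Measure.measure_univ_pos]

lemma one_sub_div_sub_one_mul_add_one {p : ℝ} (hp : p ≠ 1) :
    (1 - p / (p - 1)) * p + 1 = 1 - p / (p - 1) := by
  have : p - 1 ≠ 0 := sub_ne_zero.2 hp
  field_simp
  ring

lemma one_div_div_sub_one {p : ℝ} (hp : p ≠ 0) : 1 / (p / (p - 1)) = 1 - 1 / p := by
  rw [one_div_div]
  field_simp

lemma one_div_div_sub_one_neg {p : ℝ} (hp : p ∈ Ioo 0 1) : 1 / (p / (p - 1)) < 0 :=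
  one_div_neg.2 (div_neg_of_pos_of_neg hp.1 (by linarith [hp.2]))

def ConjugateReverseHardy {X : Type*} [MetricSpace X] [MeasurableSpace X] (μ : Measure X)
    (a : X) (p q : ℝ) (u v : X → ℝ≥0∞) (C : ℝ≥0∞) : Prop :=
  ∀ f : X → ℝ≥0∞, Measurable f →
    (∫⁻ x, (∫⁻ y in (Metric.ball a (dist x a))ᶜ, f y ∂μ) ^ q * u x ∂μ) ^ (1 / q) ≥
      C * (∫⁻ x, (f x) ^ p * v x ∂μ) ^ (1 / p)

namespace ConjugateReverseHardy

variable {X : Type*} [MetricSpace X] [MeasurableSpace X] {μ : Measure X} {a : X} {p q p' : ℝ}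
  {u v : X → ℝ≥0∞} {C : ℝ≥0∞}

theorem mul_rpow_le (h : ConjugateReverseHardy μ a p q u v C) (hp : p ∈ Ioo 0 1)
    (hp' : p' = p / (p - 1)) (hq : q < 0) (hu : Measurable u) (hv : Measurable v)
    (hv_pos : ∀ x, 0 < v x) (hv_lt : ∀ x, v x < ∞) {S : Set X} (hS : MeasurableSet S)
    (B : Set X) :
    C * (∫⁻ y in S, v y ^ (1 - p') ∂μ) ^ (1 / p) ≤
      ((∫⁻ y in S, v y ^ (1 - p') ∂μ) ^ q * ∫⁻ y in B, u y ∂μ) ^ (1 / q) := by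
  set W := ∫⁻ y in S, v y ^ (1 - p') ∂μ
  set f := S.indicator fun y => v y ^ (1 - p')
  have hf_int : ∫⁻ y, f y ∂μ = W := lintegral_indicator hS _
  have hf_weighted : ∫⁻ x, f x ^ p * v x ∂μ = W := by
    rw [← hf_int]
    congr 1 with x
    by_cases hx : x ∈ S
    · simp only [f, indicator_of_mem hx]
      calc (v x ^ (1 - p')) ^ p * v x = v x ^ ((1 - p') * p + 1) := by
            rw [rpow_add _ _ (hv_pos x).ne' (hv_lt x).ne, rpow_one, rpow_mul]
        _ = v x ^ (1 - p') := by rw [hp', one_sub_div_sub_one_mul_add_one hp.2.ne]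
    · simp [f, hx, zero_rpow_of_pos hp.1]
  have hf_inner (x : X) : W ^ q ≤ (∫⁻ y in (Metric.ball a (dist x a))ᶜ, f y ∂μ) ^ q :=
    rpow_le_rpow_of_nonpos_s4 hq.le ((setLIntegral_le_lintegral _ _).trans hf_int.le)
  calc C * W ^ (1 / p) = C * (∫⁻ x, f x ^ p * v x ∂μ) ^ (1 / p) := by rw [hf_weighted]
    _ ≤ (∫⁻ x, (∫⁻ y in (Metric.ball a (dist x a))ᶜ, f y ∂μ) ^ q * u x ∂μ) ^ (1 / q) :=
      h f ((hv.pow_const _).indicator hS)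
    _ ≤ (∫⁻ x in B, W ^ q * u x ∂μ) ^ (1 / q) :=
      rpow_le_rpow_of_nonpos_s4 (one_div_neg.2 hq).le <| (setLIntegral_le_lintegral _ _).trans <|
        lintegral_mono fun x => mul_le_mul_left (hf_inner x) _
    _ = (W ^ q * ∫⁻ y in B, u y ∂μ) ^ (1 / q) := by rw [lintegral_const_mul _ hu]

theorem le_rpow_mul_rpow (h : ConjugateReverseHardy μ a p q u v C) (hp : p ∈ Ioo 0 1)
    (hp' : p' = p / (p - 1)) (hq : q < 0) (hu : Measurable u) (hv : Measurable v)
    (hv_pos : ∀ x, 0 < v x) (hv_lt : ∀ x, v x < ∞) {S : Set X} (hS : MeasurableSet S)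
    (hW0 : ∫⁻ y in S, v y ^ (1 - p') ∂μ ≠ 0) (hWt : ∫⁻ y in S, v y ^ (1 - p') ∂μ ≠ ⊤)
    (B : Set X) :
    C ≤ (∫⁻ y in S, v y ^ (1 - p') ∂μ) ^ (1 / p') * (∫⁻ y in B, u y ∂μ) ^ (1 / q) := by
  rw [hp', one_div_div_sub_one hp.1.ne', ← hp']
  exact ENNReal.le_rpow_mul_rpow_of_mul_rpow_le hq.ne hW0 hWt
    (h.mul_rpow_le hp hp' hq hu hv hv_pos hv_lt hS B)

theorem lintegral_rpow_ne_top [SigmaFinite μ] (h : ConjugateReverseHardy μ a p q u v C)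
    (hp : p ∈ Ioo 0 1) (hp' : p' = p / (p - 1)) (hq : q < 0) (hu : Measurable u)
    (hv : Measurable v) (hu_pos : ∀ x, 0 < u x) (hv_pos : ∀ x, 0 < v x) (hv_lt : ∀ x, v x < ∞)
    (hC : 0 < C) :
    ∫⁻ y, v y ^ (1 - p') ∂μ ≠ ⊤ := by
  intro htop
  have hμ : μ ≠ 0 := by
    rintro rfl
    simp at htop
  set ν := μ.withDensity fun y => v y ^ (1 - p')
  have : SigmaFinite ν := SigmaFinite.withDensity_of_ne_top' fun y =>
    rpow_ne_top_of_ne_zero (hv_pos y).ne' (hv_lt y).ne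
  have hνS (n : ℕ) : ν (spanningSets ν n) = ∫⁻ y in spanningSets ν n, v y ^ (1 - p') ∂μ :=
    withDensity_apply _ (measurableSet_spanningSets ν n)
  have hν_tendsto : Tendsto (fun n => ν (spanningSets ν n)) atTop (𝓝 ⊤) := by
    have := tendsto_measure_iUnion_atTop (μ := ν) (monotone_spanningSets ν)
    rwa [iUnion_spanningSets, withDensity_apply _ MeasurableSet.univ, Measure.restrict_univ,
      htop] at this
  set K := (∫⁻ y in univ, u y ∂μ) ^ (1 / q)
  have hK : K ≠ ⊤ := by
    simp [K, rpow_eq_top_iff, lintegral_ne_zero_of_forall_pos hu hu_pos hμ, hq.le]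
  have hlim : Tendsto (fun n => ν (spanningSets ν n) ^ (1 / p') * K) atTop (𝓝 0) := by
    have := ((continuous_rpow_const (y := 1 / p')).tendsto ⊤).comp hν_tendsto
    rw [top_rpow_of_neg (hp' ▸ one_div_div_sub_one_neg hp)] at this
    simpa using ENNReal.Tendsto.mul_const this (Or.inr hK)
  have hbound : ∀ᶠ n in atTop, C ≤ ν (spanningSets ν n) ^ (1 / p') * K := by
    filter_upwards [hν_tendsto.eventually_ne top_ne_zero] with n hn
    rw [hνS] at hn ⊢
    exact h.le_rpow_mul_rpow hp hp' hq hu hv hv_pos hv_lt (measurableSet_spanningSets ν n) hn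
      (hνS n ▸ (measure_spanningSets_lt_top ν n).ne) univ
  exact hC.ne' (nonpos_iff_eq_zero.1 (ge_of_tendsto hlim hbound))

theorem setLIntegral_ne_top [SigmaFinite μ] (h : ConjugateReverseHardy μ a p q u v C)
    (hp : p ∈ Ioo 0 1) (hp' : p' = p / (p - 1)) (hq : q < 0) (hu : Measurable u)
    (hv : Measurable v) (hu_pos : ∀ x, 0 < u x) (hv_pos : ∀ x, 0 < v x) (hv_lt : ∀ x, v x < ∞)
    (hC : 0 < C) (B : Set X) :
    ∫⁻ y in B, u y ∂μ ≠ ⊤ := by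
  rcases eq_or_ne μ 0 with rfl | hμ
  · simp
  have hWt := h.lintegral_rpow_ne_top hp hp' hq hu hv hu_pos hv_pos hv_lt hC
  have hW0 : ∫⁻ y, v y ^ (1 - p') ∂μ ≠ 0 := lintegral_ne_zero_of_forall_pos
    (hv.pow_const _) (fun y => rpow_pos (hv_pos y) (hv_lt y).ne) hμ
  rw [← Measure.restrict_univ (μ := μ)] at hWt hW0
  have hbound := h.le_rpow_mul_rpow hp hp' hq hu hv hv_pos hv_lt MeasurableSet.univ hW0 hWt B
  intro hU
  rw [hU, top_rpow_of_neg (one_div_neg.2 hq), mul_zero] at hbound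
  exact hC.ne' (nonpos_iff_eq_zero.1 hbound)

theorem le_setLIntegral_rpow_mul [SigmaFinite μ] (h : ConjugateReverseHardy μ a p q u v C)
    (hp : p ∈ Ioo 0 1) (hp' : p' = p / (p - 1)) (hq : q < 0) (hu : Measurable u)
    (hv : Measurable v) (hu_pos : ∀ x, 0 < u x) (hv_pos : ∀ x, 0 < v x) (hv_lt : ∀ x, v x < ∞)
    (hC : 0 < C) {B : Set X} (hB : MeasurableSet B) :
    C ≤ (∫⁻ y in B, u y ∂μ) ^ (1 / q) * (∫⁻ y in Bᶜ, v y ^ (1 - p') ∂μ) ^ (1 / p') := by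
  have hWt : ∫⁻ y in Bᶜ, v y ^ (1 - p') ∂μ ≠ ⊤ :=
    ne_top_of_le_ne_top (h.lintegral_rpow_ne_top hp hp' hq hu hv hu_pos hv_pos hv_lt hC)
      (setLIntegral_le_lintegral _ _)
  rcases eq_or_ne (∫⁻ y in Bᶜ, v y ^ (1 - p') ∂μ) 0 with hW0 | hW0
  · have hU : (∫⁻ y in B, u y ∂μ) ^ (1 / q) ≠ 0 := by
      simp [rpow_eq_zero_iff, h.setLIntegral_ne_top hp hp' hq hu hv hu_pos hv_pos hv_lt hC B,
        hq.le]
    rw [hW0, zero_rpow_of_neg (hp' ▸ one_div_div_sub_one_neg hp), mul_top hU]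
    exact le_top
  · rw [mul_comm]
    exact h.le_rpow_mul_rpow hp hp' hq hu hv hv_pos hv_lt hB.compl hW0 hWt B

end ConjugateReverseHardy

theorem conjugate_reverse_integral_hardy_necessity_general
    {X : Type*} [MetricSpace X] [MeasurableSpace X] [BorelSpace X]
    (μ : Measure X) [SigmaFinite μ] (a : X)
    (p q p' : ℝ) (hp : p ∈ Set.Ioo (0:ℝ) 1) (hq : q < 0) (hp' : p' = p / (p - 1))
    (u v : X → ℝ≥0∞) (hu : Measurable u) (hv : Measurable v)
    (hu_pos : ∀ x, 0 < u x)
    (hv_pos : ∀ x, 0 < v x) (hv_lt : ∀ x, v x < ∞)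
    (C : ℝ≥0∞) (hC_pos : 0 < C)
    (hineq : ∀ f : X → ℝ≥0∞, Measurable f →
      (∫⁻ x, (∫⁻ y in (Metric.ball a (dist x a))ᶜ, f y ∂μ) ^ q * u x ∂μ) ^ (1 / q) ≥
        C * (∫⁻ x, (f x) ^ p * v x ∂μ) ^ (1 / p)) :
    (∀ x : X, x ≠ a →
      (∫⁻ y in Metric.ball a (dist x a), u y ∂μ) ^ (1 / q) *
        (∫⁻ y in (Metric.ball a (dist x a))ᶜ, (v y) ^ (1 - p') ∂μ) ^ (1 / p') ≥ C) ∧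
    (⨅ (x : X) (_ : x ≠ a),
      (∫⁻ y in Metric.ball a (dist x a), u y ∂μ) ^ (1 / q) *
        (∫⁻ y in (Metric.ball a (dist x a))ᶜ, (v y) ^ (1 - p') ∂μ) ^ (1 / p')) ≥ C := by
  have hball (x : X) := ConjugateReverseHardy.le_setLIntegral_rpow_mul hineq hp hp' hq
    hu hv hu_pos hv_pos hv_lt hC_pos (measurableSet_ball (x := a) (ε := dist x a))
  exact ⟨fun x _ => hball x, le_iInf₂ fun x _ => hball x⟩

/-- Necessity of the condition `D₂ > 0` for the conjugate reverse integral Hardy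
inequality on a metric measure space: any admissible constant `C` is a lower bound
for the quantity defining `D₂`, so `D₂ ≥ C > 0`. -/
theorem conjugate_reverse_integral_hardy_necessity
    {X : Type*} [MetricSpace X] [MeasurableSpace X] [BorelSpace X]
    (μ : Measure X) [SigmaFinite μ] (a : X)
    (p q p' : ℝ) (hp : p ∈ Set.Ioo (0:ℝ) 1) (hq : q < 0) (hp' : p' = p / (p - 1))
    (u v : X → ℝ≥0∞) (hu : Measurable u) (hv : Measurable v)
    (hu_pos : ∀ x, 0 < u x) (hu_lt : ∀ x, u x < ∞)
    (hv_pos : ∀ x, 0 < v x) (hv_lt : ∀ x, v x < ∞)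
    (hu_loc : ∀ K : Set X, IsCompact K → ∫⁻ x in K, u x ∂μ < ∞)
    (hv_loc : ∀ K : Set X, IsCompact K → ∫⁻ x in K, v x ∂μ < ∞)
    (C : ℝ≥0∞) (hC_pos : 0 < C)
    (hineq : ∀ f : X → ℝ≥0∞, Measurable f →
      (∫⁻ x, (∫⁻ y in (Metric.ball a (dist x a))ᶜ, f y ∂μ) ^ q * u x ∂μ) ^ (1 / q) ≥
        C * (∫⁻ x, (f x) ^ p * v x ∂μ) ^ (1 / p)) :
    (∀ x : X, x ≠ a →
      (∫⁻ y in Metric.ball a (dist x a), u y ∂μ) ^ (1 / q) *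
        (∫⁻ y in (Metric.ball a (dist x a))ᶜ, (v y) ^ (1 - p') ∂μ) ^ (1 / p') ≥ C) ∧
    (⨅ (x : X) (_ : x ≠ a),
      (∫⁻ y in Metric.ball a (dist x a), u y ∂μ) ^ (1 / q) *
        (∫⁻ y in (Metric.ball a (dist x a))ᶜ, (v y) ^ (1 - p') ∂μ) ^ (1 / p')) ≥ C :=
  conjugate_reverse_integral_hardy_necessity_general μ a p q p' hp hq hp' u v hu hv hu_pos hv_pos
    hv_lt C hC_pos hineq
end

section
/- Let n ≥ 2, p ∈ (0,1), q < 0, p' = p/(p-1), and α, β ∈ ℝ satisfy 0 ≤ α + n < 1, β(1-p') + n > 0, and (α+n)/q + (β(1-p')+n)/p' ≥ 1/q + 1/p'. Then the infimum over r > 0 of (∫_r^∞ (sinh ρ)^{α+n-1} dρ)^{1/q} · (∫_0^r (sinh ρ)^{β(1-p')+n-1} dρ)^{1/p'} is strictly positive. (Note that α + n < 1 makes the first integral finite and β(1-p') + n > 0 makes the second integral finite, and both integrals are strictly positive, so each factor is a positive real raised to a negative power.) -/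
open MeasureTheory Set

namespace HyperbolicHardyAux

open Real Filter

lemma sinh_le_exp {x : ℝ} : Real.sinh x ≤ Real.exp x := by
  rw [Real.sinh_eq]
  have := Real.exp_pos (-x); have := Real.exp_pos x
  linarith

lemma exp_div_four_le_sinh {x : ℝ} (hx : 1 ≤ x) : Real.exp x / 4 ≤ Real.sinh x := by
  rw [Real.sinh_eq]
  have h1 : Real.exp (-x) ≤ Real.exp (-1) := Real.exp_le_exp.mpr (by linarith)
  have h2 : Real.exp (-1) ≤ 1/2 := by
    rw [Real.exp_neg, inv_le_comm₀ (Real.exp_pos 1) (by norm_num)]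
    have := Real.add_one_le_exp 1
    linarith
  have h3 : (1:ℝ) ≤ Real.exp x := by
    rw [← Real.exp_zero]; exact Real.exp_le_exp.mpr (by linarith)
  linarith

lemma sinh_le_exp_one_mul {x : ℝ} (h0 : 0 ≤ x) (h1 : x ≤ 1) :
    Real.sinh x ≤ Real.exp 1 * x := by
  rw [Real.sinh_eq]
  have key : 1 - Real.exp (-(2*x)) ≤ 2*x := by
    have := Real.add_one_le_exp (-(2*x)); linarith
  have hx2 : Real.exp x - Real.exp (-x) = Real.exp x * (1 - Real.exp (-(2*x))) := by
    rw [mul_sub, mul_one, ← Real.exp_add]; ring_nf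
  have he : Real.exp x ≤ Real.exp 1 := Real.exp_le_exp.mpr h1
  have hep : (0:ℝ) < Real.exp x := Real.exp_pos x
  have h4 : Real.exp x * (1 - Real.exp (-(2*x))) ≤ Real.exp x * (2*x) :=
    mul_le_mul_of_nonneg_left key hep.le
  have h5 : Real.exp x * (2*x) ≤ Real.exp 1 * (2*x) :=
    mul_le_mul_of_nonneg_right he (by linarith)
  calc (Real.exp x - Real.exp (-x))/2 ≤ (Real.exp 1 * (2*x))/2 := by rw [hx2]; linarith
    _ = Real.exp 1 * x := by ring

lemma sinh_rpow_le_on_unit {s x : ℝ} (h0 : 0 < x) (h1 : x ≤ 1) :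
    Real.sinh x ^ s ≤ Real.exp |s| * x ^ s := by
  rcases le_or_gt 0 s with hsn | hsn
  · have h2 : Real.sinh x ^ s ≤ (Real.exp 1 * x) ^ s :=
      Real.rpow_le_rpow (Real.sinh_pos_iff.mpr h0).le (sinh_le_exp_one_mul h0.le h1) hsn
    calc Real.sinh x ^ s ≤ (Real.exp 1 * x) ^ s := h2
      _ = Real.exp 1 ^ s * x ^ s := Real.mul_rpow (Real.exp_pos 1).le h0.le
      _ ≤ Real.exp |s| * x ^ s := by
          apply mul_le_mul_of_nonneg_right _ (Real.rpow_nonneg h0.le s)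
          rw [← Real.exp_mul, one_mul, abs_of_nonneg hsn]
  · have h2 : Real.sinh x ^ s ≤ x ^ s :=
      Real.rpow_le_rpow_of_nonpos h0 (Real.self_le_sinh_iff.mpr h0.le) hsn.le
    calc Real.sinh x ^ s ≤ x ^ s := h2
      _ = 1 * x ^ s := (one_mul _).symm
      _ ≤ Real.exp |s| * x ^ s := by
          apply mul_le_mul_of_nonneg_right _ (Real.rpow_nonneg h0.le s)
          exact Real.one_le_exp (abs_nonneg s)

lemma contOn_sinh_rpow {s : ℝ} {A : Set ℝ} (hA : ∀ x ∈ A, 0 < x) :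
    ContinuousOn (fun ρ => Real.sinh ρ ^ s) A := by
  apply ContinuousOn.rpow_const (Real.continuous_sinh.continuousOn)
  intro x hx
  exact Or.inl (ne_of_gt (Real.sinh_pos_iff.mpr (hA x hx)))

lemma integrableOn_sinh_rpow_Ioi {r s : ℝ} (hr : 0 < r) (hs : s < 0) :
    IntegrableOn (fun ρ => Real.sinh ρ ^ s) (Ioi r) := by
  have key : ∀ b : ℝ, 1 ≤ b → IntegrableOn (fun ρ => Real.sinh ρ ^ s) (Ioi b) := by
    intro b hb
    have h0 : IntegrableOn (fun x => Real.exp (s * x)) (Ioi b) := by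
      have := exp_neg_integrableOn_Ioi b (neg_pos.mpr hs)
      simpa [neg_neg] using this
    have hdom : Integrable (fun x => (4:ℝ) ^ (-s) * Real.exp (s * x))
        (volume.restrict (Ioi b)) := h0.const_mul _
    apply Integrable.mono' hdom
    · exact (contOn_sinh_rpow (fun x hx =>
        lt_of_le_of_lt (by linarith : (0:ℝ) ≤ b) hx)).aestronglyMeasurable measurableSet_Ioi
    · filter_upwards [ae_restrict_mem measurableSet_Ioi] with x hx
      have hx1 : 1 ≤ x := hb.trans (le_of_lt hx)
      have hsp : 0 < Real.sinh x := Real.sinh_pos_iff.mpr (by linarith)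
      rw [Real.norm_eq_abs, abs_of_nonneg (Real.rpow_nonneg hsp.le s)]
      have hlb : Real.exp x / 4 ≤ Real.sinh x := exp_div_four_le_sinh hx1
      calc Real.sinh x ^ s ≤ (Real.exp x / 4) ^ s :=
            Real.rpow_le_rpow_of_nonpos (by positivity) hlb hs.le
        _ = (4:ℝ) ^ (-s) * Real.exp (s * x) := by
            rw [Real.div_rpow (Real.exp_pos x).le (by norm_num), ← Real.exp_mul,
              Real.rpow_neg (by norm_num)]
            rw [div_eq_mul_inv, mul_comm, mul_comm x s]
  rcases le_or_gt 1 r with h | h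
  · exact key r h
  · have heq : Ioi r = Ioc r 1 ∪ Ioi 1 := (Ioc_union_Ioi_eq_Ioi (le_of_lt h)).symm
    rw [heq]
    apply IntegrableOn.union
    · exact ((contOn_sinh_rpow (fun x hx =>
        lt_of_lt_of_le hr hx.1)).integrableOn_compact isCompact_Icc).mono_set Ioc_subset_Icc_self
    · exact key 1 le_rfl

lemma integrableOn_rpow_Ioc {s b : ℝ} (hs : -1 < s) (hb : 0 ≤ b) :
    IntegrableOn (fun x : ℝ => x ^ s) (Ioc 0 b) := by
  have := intervalIntegral.intervalIntegrable_rpow' (a := 0) (b := b) hs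
  rwa [intervalIntegrable_iff_integrableOn_Ioc_of_le hb] at this

lemma integrableOn_sinh_rpow_Ioc {r s : ℝ} (hr : 0 < r) (hs : -1 < s) :
    IntegrableOn (fun ρ => Real.sinh ρ ^ s) (Ioc 0 r) := by
  have hunit : ∀ b : ℝ, 0 < b → b ≤ 1 → IntegrableOn (fun ρ => Real.sinh ρ ^ s) (Ioc 0 b) := by
    intro b hb hb1
    have hdom : Integrable (fun x : ℝ => Real.exp |s| * x ^ s)
        (volume.restrict (Ioc 0 b)) := (integrableOn_rpow_Ioc hs hb.le).const_mul _
    apply Integrable.mono' hdom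
    · exact (contOn_sinh_rpow (fun x hx => hx.1)).aestronglyMeasurable measurableSet_Ioc
    · filter_upwards [ae_restrict_mem measurableSet_Ioc] with x hx
      have hsp : 0 < Real.sinh x := Real.sinh_pos_iff.mpr hx.1
      rw [Real.norm_eq_abs, abs_of_nonneg (Real.rpow_nonneg hsp.le s)]
      exact sinh_rpow_le_on_unit hx.1 (hx.2.trans hb1)
  rcases le_or_gt r 1 with h | h
  · exact hunit r hr h
  · have heq : Ioc (0:ℝ) r = Ioc 0 1 ∪ Ioc 1 r := (Ioc_union_Ioc_eq_Ioc one_pos.le h.le).symm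
    rw [heq]
    apply IntegrableOn.union (hunit 1 one_pos le_rfl)
    exact ((contOn_sinh_rpow (fun x hx => lt_of_lt_of_le one_pos hx.1)).integrableOn_compact
      isCompact_Icc).mono_set Ioc_subset_Icc_self

lemma integrableOn_sinh_rpow_Ioo {r s : ℝ} (hr : 0 < r) (hs : -1 < s) :
    IntegrableOn (fun ρ => Real.sinh ρ ^ s) (Ioo 0 r) :=
  (integrableOn_sinh_rpow_Ioc hr hs).mono_set Ioo_subset_Ioc_self

lemma integral_exp_mul_Ioi {r s : ℝ} (hs : s < 0) :
    ∫ x in Ioi r, Real.exp (s * x) = Real.exp (s * r) / (-s) := by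
  have hsne : s ≠ 0 := ne_of_lt hs
  have hint : IntegrableOn (fun x => Real.exp (s * x)) (Ioi r) := by
    have := exp_neg_integrableOn_Ioi r (neg_pos.mpr hs)
    simpa using this
  have hderiv : ∀ x ∈ Ioi r, HasDerivAt (fun x => Real.exp (s * x) / s)
      (Real.exp (s * x)) x := by
    intro x _
    have h1 : HasDerivAt (fun x : ℝ => s * x) s x := by
      simpa using (hasDerivAt_id x).const_mul s
    have h2 : HasDerivAt (fun x => Real.exp (s * x)) (Real.exp (s * x) * s) x :=
      (Real.hasDerivAt_exp (s * x)).comp x h1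
    have h3 := h2.div_const s
    simpa [mul_div_assoc, div_self hsne] using h3
  have hcont : ContinuousWithinAt (fun x => Real.exp (s * x) / s) (Ici r) r :=
    (Continuous.continuousWithinAt (by continuity))
  have htend : Tendsto (fun x => Real.exp (s * x) / s) atTop (nhds 0) := by
    have h1 : Tendsto (fun x : ℝ => s * x) atTop atBot :=
      Tendsto.const_mul_atTop_of_neg hs tendsto_id
    have h2 : Tendsto (fun x => Real.exp (s * x)) atTop (nhds 0) :=
      Real.tendsto_exp_atBot.comp h1
    simpa using h2.div_const s
  have := integral_Ioi_of_hasDerivAt_of_tendsto hcont hderiv hint htend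
  rw [this, zero_sub, div_neg]

lemma one_add_le {k u : ℝ} (hk : 0 < k) (hu : 0 ≤ u) :
    1 + u ≤ (1 + k) * Real.exp (u / k) := by
  have hexp : u / k + 1 ≤ Real.exp (u / k) := Real.add_one_le_exp (u / k)
  have h3 : k * (u / k) = u := by field_simp
  nlinarith [mul_le_mul_of_nonneg_left hexp (by linarith : (0:ℝ) ≤ 1 + k),
    div_nonneg hu hk.le]

lemma key_ineq {m ε u : ℝ} (hm : 0 < m) (hε : 0 < ε) (hu : 0 ≤ u) :
    ((1:ℝ) + m / ε) ^ (-m) ≤ (1 + u) ^ (-m) * Real.exp (ε * u) := by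
  have hkpos : 0 < m / ε := div_pos hm hε
  have h1 : (1:ℝ) + u ≤ (1 + m / ε) * Real.exp (u / (m / ε)) := one_add_le hkpos hu
  have hP : (0:ℝ) < 1 + m / ε := by linarith
  have hQ : (0:ℝ) < 1 + u := by linarith
  have h4 : ((1:ℝ) + u) ^ m ≤ ((1 + m / ε) * Real.exp (u / (m / ε))) ^ m :=
    Real.rpow_le_rpow hQ.le h1 hm.le
  have h5 : ((1 + m / ε) * Real.exp (u / (m / ε))) ^ m
      = (1 + m / ε) ^ m * Real.exp (ε * u) := by
    rw [Real.mul_rpow hP.le (Real.exp_pos _).le, ← Real.exp_mul]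
    congr 2
    field_simp
  rw [h5] at h4
  rw [Real.rpow_neg hP.le, Real.rpow_neg hQ.le]
  have hQm : (0:ℝ) < (1 + u) ^ m := Real.rpow_pos_of_pos hQ m
  have hPm : (0:ℝ) < (1 + m / ε) ^ m := Real.rpow_pos_of_pos hP m
  rw [inv_eq_one_div, inv_eq_one_div, div_mul_eq_mul_div, div_le_div_iff₀ hPm hQm]
  nlinarith [Real.exp_pos (ε * u)]

lemma sinh_rpow_le_exp_mul {s x : ℝ} (hx : 1 ≤ x) :
    Real.sinh x ^ s ≤ (4:ℝ) ^ |s| * Real.exp (s * x) := by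
  have hxp : (0:ℝ) < x := lt_of_lt_of_le one_pos hx
  have hsp : 0 < Real.sinh x := Real.sinh_pos_iff.mpr hxp
  rcases le_or_gt 0 s with hsn | hsn
  · calc Real.sinh x ^ s ≤ Real.exp x ^ s := Real.rpow_le_rpow hsp.le sinh_le_exp hsn
      _ = Real.exp (s * x) := by rw [← Real.exp_mul, mul_comm]
      _ = 1 * Real.exp (s * x) := (one_mul _).symm
      _ ≤ (4:ℝ) ^ |s| * Real.exp (s * x) :=
          mul_le_mul_of_nonneg_right (Real.one_le_rpow (by norm_num) (abs_nonneg s))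
            (Real.exp_pos _).le
  · calc Real.sinh x ^ s ≤ (Real.exp x / 4) ^ s :=
        Real.rpow_le_rpow_of_nonpos (by positivity) (exp_div_four_le_sinh hx) hsn.le
      _ = (4:ℝ) ^ |s| * Real.exp (s * x) := by
          rw [Real.div_rpow (Real.exp_pos x).le (by norm_num), ← Real.exp_mul,
            abs_of_neg hsn, Real.rpow_neg (by norm_num), div_eq_mul_inv, mul_comm,
            mul_comm x s]

lemma integral_exp_mul_interval {T r : ℝ} (hT : T ≠ 0) : ∫ x in (1:ℝ)..r, Real.exp (T * x)
    = Real.exp (T * r) / T - Real.exp (T * 1) / T := by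
  apply intervalIntegral.integral_eq_sub_of_hasDerivAt
  · intro x _
    have h1 : HasDerivAt (fun x : ℝ => T * x) T x := by
      simpa using (hasDerivAt_id x).const_mul T
    have h2 : HasDerivAt (fun x => Real.exp (T * x)) (Real.exp (T * x) * T) x :=
      (Real.hasDerivAt_exp (T * x)).comp x h1
    have h3 := h2.div_const T
    simpa [mul_div_assoc, div_self hT] using h3
  · apply Continuous.intervalIntegrable; continuity

lemma integral_sinh_rpow_Ioi_pos {r s : ℝ} (hr : 0 < r) (hs : s < 0) :
    0 < ∫ ρ in Ioi r, Real.sinh ρ ^ s := by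
  have hint := integrableOn_sinh_rpow_Ioi hr hs
  have hnn : 0 ≤ᵐ[volume.restrict (Ioi r)] (fun ρ => Real.sinh ρ ^ s) := by
    filter_upwards [ae_restrict_mem measurableSet_Ioi] with x hx
    exact Real.rpow_nonneg (Real.sinh_pos_iff.mpr (hr.trans hx)).le s
  have hmono : ∫ ρ in Ioc r (r+1), Real.sinh ρ ^ s ≤ ∫ ρ in Ioi r, Real.sinh ρ ^ s :=
    setIntegral_mono_set hint hnn (HasSubset.Subset.eventuallyLE Ioc_subset_Ioi_self)
  refine lt_of_lt_of_le ?_ hmono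
  rw [← intervalIntegral.integral_of_le (by linarith : r ≤ r + 1)]
  apply intervalIntegral.intervalIntegral_pos_of_pos_on
  · rw [intervalIntegrable_iff_integrableOn_Ioc_of_le (by linarith : r ≤ r+1)]
    exact hint.mono_set Ioc_subset_Ioi_self
  · intro x hx
    exact Real.rpow_pos_of_pos (Real.sinh_pos_iff.mpr (hr.trans hx.1)) s
  · linarith

lemma integral_sinh_rpow_Ioo_pos {r s : ℝ} (hr : 0 < r) (hs : -1 < s) :
    0 < ∫ ρ in Ioo 0 r, Real.sinh ρ ^ s := by
  rw [← integral_Ioc_eq_integral_Ioo, ← intervalIntegral.integral_of_le hr.le]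
  apply intervalIntegral.intervalIntegral_pos_of_pos_on
  · rw [intervalIntegrable_iff_integrableOn_Ioc_of_le hr.le]
    exact integrableOn_sinh_rpow_Ioc hr hs
  · intro x hx
    exact Real.rpow_pos_of_pos (Real.sinh_pos_iff.mpr hx.1) s
  · exact hr

lemma A_le_small {s r : ℝ} (hs : -1 ≤ s) (hs' : s < 0) (hr : 0 < r) (hr1 : r ≤ 1) :
    ∫ ρ in Ioi r, Real.sinh ρ ^ s ≤
      ((∫ ρ in Ioi 1, Real.sinh ρ ^ s) + 1) * (1 - Real.log r) := by
  have hintIoi1 : IntegrableOn (fun ρ => Real.sinh ρ ^ s) (Ioi 1) :=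
    integrableOn_sinh_rpow_Ioi one_pos hs'
  have hintIoc : IntegrableOn (fun ρ => Real.sinh ρ ^ s) (Ioc r 1) :=
    ((contOn_sinh_rpow (fun x hx => lt_of_lt_of_le hr hx.1)).integrableOn_compact
      isCompact_Icc).mono_set Ioc_subset_Icc_self
  have hdisj : Disjoint (Ioc r 1) (Ioi (1:ℝ)) := by
    rw [Set.disjoint_left]
    intro x hx1 hx2
    exact absurd hx2 (not_lt.mpr hx1.2)
  have hsplit : ∫ ρ in Ioi r, Real.sinh ρ ^ s
      = (∫ ρ in Ioc r 1, Real.sinh ρ ^ s) + ∫ ρ in Ioi 1, Real.sinh ρ ^ s := by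
    rw [← setIntegral_union hdisj measurableSet_Ioi hintIoc hintIoi1,
      Ioc_union_Ioi_eq_Ioi hr1]
  have hintinv : IntegrableOn (fun x : ℝ => x⁻¹) (Ioc r 1) := by
    have hco : ContinuousOn (fun x : ℝ => x⁻¹) (Icc r 1) :=
      continuousOn_inv₀.mono (fun x hx => ne_of_gt (lt_of_lt_of_le hr hx.1))
    exact (hco.integrableOn_compact isCompact_Icc).mono_set Ioc_subset_Icc_self
  have hmono : ∫ ρ in Ioc r 1, Real.sinh ρ ^ s ≤ ∫ ρ in Ioc r 1, (fun x : ℝ => x⁻¹) ρ := by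
    apply setIntegral_mono_on hintIoc hintinv measurableSet_Ioc
    intro x hx
    have hx0 : 0 < x := lt_of_lt_of_le hr hx.1.le
    calc Real.sinh x ^ s ≤ x ^ s :=
          Real.rpow_le_rpow_of_nonpos hx0 (Real.self_le_sinh_iff.mpr hx0.le) hs'.le
      _ ≤ x ^ (-1:ℝ) := Real.rpow_le_rpow_of_exponent_ge hx0 hx.2 hs
      _ = x⁻¹ := Real.rpow_neg_one x
  have hinvval : ∫ ρ in Ioc r 1, (fun x : ℝ => x⁻¹) ρ = - Real.log r := by
    rw [← intervalIntegral.integral_of_le hr1, integral_inv]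
    · rw [one_div, Real.log_inv]
    · intro h
      rcases mem_uIcc.mp h with ⟨h1, _⟩ | ⟨h1, _⟩ <;> linarith
  have hA1nn : 0 ≤ ∫ ρ in Ioi 1, Real.sinh ρ ^ s := by
    apply setIntegral_nonneg measurableSet_Ioi
    intro x hx
    exact Real.rpow_nonneg (Real.sinh_pos_iff.mpr (lt_of_lt_of_le one_pos hx.le)).le s
  have hlog : Real.log r ≤ 0 := Real.log_nonpos hr.le hr1
  rw [hsplit]
  rw [hinvval] at hmono
  nlinarith [hmono, hA1nn, hlog]

lemma B_le_small {c r : ℝ} (hc : 0 < c) (hr : 0 < r) (hr1 : r ≤ 1) :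
    ∫ ρ in Ioo 0 r, Real.sinh ρ ^ (c - 1) ≤ (Real.exp |c - 1| / c) * r ^ c := by
  have hs2 : (-1:ℝ) < c - 1 := by linarith
  have hint1 : IntegrableOn (fun ρ => Real.sinh ρ ^ (c-1)) (Ioo 0 r) :=
    integrableOn_sinh_rpow_Ioo hr hs2
  have hint2 : IntegrableOn (fun x : ℝ => Real.exp |c-1| * x ^ (c-1)) (Ioo 0 r) :=
    ((integrableOn_rpow_Ioc hs2 hr.le).mono_set Ioo_subset_Ioc_self).const_mul _
  have hmono : ∫ ρ in Ioo 0 r, Real.sinh ρ ^ (c-1)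
      ≤ ∫ ρ in Ioo 0 r, Real.exp |c-1| * ρ ^ (c-1) := by
    apply setIntegral_mono_on hint1 hint2 measurableSet_Ioo
    intro x hx
    exact sinh_rpow_le_on_unit hx.1 (hx.2.le.trans hr1)
  have hval : ∫ ρ in Ioo 0 r, Real.exp |c-1| * ρ ^ (c-1)
      = Real.exp |c-1| * (r ^ c / c) := by
    rw [integral_const_mul]
    congr 1
    rw [← integral_Ioc_eq_integral_Ioo, ← intervalIntegral.integral_of_le hr.le,
      integral_rpow (Or.inl hs2)]
    rw [Real.zero_rpow (by intro h; nlinarith [h] : c - 1 + 1 ≠ 0)]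
    rw [show c - 1 + 1 = c by ring]
    ring
  rw [hval] at hmono
  calc ∫ ρ in Ioo 0 r, Real.sinh ρ ^ (c-1) ≤ Real.exp |c-1| * (r ^ c / c) := hmono
    _ = (Real.exp |c - 1| / c) * r ^ c := by ring

lemma A_le_large {s r : ℝ} (hs' : s < 0) (hr : 1 ≤ r) :
    ∫ ρ in Ioi r, Real.sinh ρ ^ s ≤ ((4:ℝ) ^ (-s) / (-s)) * Real.exp (s * r) := by
  have hr0 : (0:ℝ) < r := lt_of_lt_of_le one_pos hr
  have hint1 : IntegrableOn (fun ρ => Real.sinh ρ ^ s) (Ioi r) :=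
    integrableOn_sinh_rpow_Ioi hr0 hs'
  have hintexp : IntegrableOn (fun x => Real.exp (s * x)) (Ioi r) := by
    have := exp_neg_integrableOn_Ioi r (neg_pos.mpr hs')
    simpa [neg_neg] using this
  have hint2 : IntegrableOn (fun x => (4:ℝ) ^ (-s) * Real.exp (s * x)) (Ioi r) :=
    hintexp.const_mul _
  have hmono : ∫ ρ in Ioi r, Real.sinh ρ ^ s
      ≤ ∫ ρ in Ioi r, (4:ℝ) ^ (-s) * Real.exp (s * ρ) := by
    apply setIntegral_mono_on hint1 hint2 measurableSet_Ioi
    intro x hx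
    have := sinh_rpow_le_exp_mul (s := s) (hr.trans hx.le)
    rwa [abs_of_neg hs'] at this
  have hval : ∫ ρ in Ioi r, (4:ℝ) ^ (-s) * Real.exp (s * ρ)
      = (4:ℝ) ^ (-s) * (Real.exp (s * r) / (-s)) := by
    rw [integral_const_mul, integral_exp_mul_Ioi hs']
  rw [hval] at hmono
  calc ∫ ρ in Ioi r, Real.sinh ρ ^ s ≤ (4:ℝ) ^ (-s) * (Real.exp (s * r) / (-s)) := hmono
    _ = ((4:ℝ) ^ (-s) / (-s)) * Real.exp (s * r) := by ring

lemma B_le_large {c T r : ℝ} (hc : 0 < c) (hT : 0 < T) (hcT : c - 1 ≤ T) (hr : 1 ≤ r) :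
    ∫ ρ in Ioo 0 r, Real.sinh ρ ^ (c - 1) ≤
      ((∫ ρ in Ioo 0 1, Real.sinh ρ ^ (c - 1)) + (4:ℝ) ^ |c - 1| / T) * Real.exp (T * r) := by
  have hs2 : (-1:ℝ) < c - 1 := by linarith
  have hr0 : (0:ℝ) < r := lt_of_lt_of_le one_pos hr
  have hint1 : IntegrableOn (fun ρ => Real.sinh ρ ^ (c-1)) (Ioo 0 1) :=
    integrableOn_sinh_rpow_Ioo one_pos hs2
  have hintIco : IntegrableOn (fun ρ => Real.sinh ρ ^ (c-1)) (Ico 1 r) := by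
    apply ((contOn_sinh_rpow (fun x hx => lt_of_lt_of_le one_pos hx.1)).integrableOn_compact
      (isCompact_Icc (a := (1:ℝ)) (b := r))).mono_set Ico_subset_Icc_self
  have hdisj : Disjoint (Ioo (0:ℝ) 1) (Ico (1:ℝ) r) := by
    rw [Set.disjoint_left]
    intro x hx1 hx2
    exact absurd hx2.1 (not_le.mpr hx1.2)
  have hsplit : ∫ ρ in Ioo 0 r, Real.sinh ρ ^ (c-1)
      = (∫ ρ in Ioo 0 1, Real.sinh ρ ^ (c-1)) + ∫ ρ in Ico 1 r, Real.sinh ρ ^ (c-1) := by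
    rw [← setIntegral_union hdisj measurableSet_Ico hint1 hintIco,
      Ioo_union_Ico_eq_Ioo one_pos hr]
  have hintexp : IntegrableOn (fun x => (4:ℝ) ^ |c-1| * Real.exp (T * x)) (Ico 1 r) := by
    apply Integrable.const_mul
    exact (((Real.continuous_exp.comp (continuous_const.mul continuous_id)).continuousOn).integrableOn_compact
      (isCompact_Icc (a := (1:ℝ)) (b := r))).mono_set Ico_subset_Icc_self
  have hmono : ∫ ρ in Ico 1 r, Real.sinh ρ ^ (c-1)
      ≤ ∫ ρ in Ico 1 r, (4:ℝ) ^ |c-1| * Real.exp (T * ρ) := by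
    apply setIntegral_mono_on hintIco hintexp measurableSet_Ico
    intro x hx
    calc Real.sinh x ^ (c-1) ≤ (4:ℝ) ^ |c-1| * Real.exp ((c-1) * x) :=
          sinh_rpow_le_exp_mul hx.1
      _ ≤ (4:ℝ) ^ |c-1| * Real.exp (T * x) := by
          apply mul_le_mul_of_nonneg_left _ (Real.rpow_nonneg (by norm_num) _)
          apply Real.exp_le_exp.mpr
          apply mul_le_mul_of_nonneg_right hcT
          linarith [hx.1]
  have hval : ∫ ρ in Ico 1 r, (4:ℝ) ^ |c-1| * Real.exp (T * ρ)
      = (4:ℝ) ^ |c-1| * (Real.exp (T * r) / T - Real.exp (T * 1) / T) := by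
    rw [integral_const_mul]
    congr 1
    rw [integral_Ico_eq_integral_Ioo, ← integral_Ioc_eq_integral_Ioo,
      ← intervalIntegral.integral_of_le hr, integral_exp_mul_interval (ne_of_gt hT)]
  rw [hval] at hmono
  have hB1nn : 0 ≤ ∫ ρ in Ioo 0 1, Real.sinh ρ ^ (c-1) := by
    apply setIntegral_nonneg measurableSet_Ioo
    intro x hx
    exact Real.rpow_nonneg (Real.sinh_pos_iff.mpr hx.1).le _
  have hexp1 : (1:ℝ) ≤ Real.exp (T * r) := by
    rw [← Real.exp_zero]
    apply Real.exp_le_exp.mpr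
    positivity
  have h4T : (0:ℝ) < (4:ℝ) ^ |c-1| := Real.rpow_pos_of_pos (by norm_num) _
  have hTexp : (0:ℝ) < Real.exp (T * 1) := Real.exp_pos _
  rw [hsplit]
  have key1 : (∫ ρ in Ioo 0 1, Real.sinh ρ ^ (c-1))
      ≤ (∫ ρ in Ioo 0 1, Real.sinh ρ ^ (c-1)) * Real.exp (T * r) := by
    nlinarith [mul_nonneg hB1nn (sub_nonneg.mpr hexp1)]
  have key2 : (4:ℝ) ^ |c-1| * (Real.exp (T*r)/T - Real.exp (T*1)/T)
      ≤ ((4:ℝ) ^ |c-1| / T) * Real.exp (T*r) := by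
    have hexpand : (4:ℝ) ^ |c-1| * (Real.exp (T*r)/T - Real.exp (T*1)/T)
        = ((4:ℝ)^|c-1|/T) * Real.exp (T*r) - ((4:ℝ)^|c-1|/T) * Real.exp (T*1) := by ring
    nlinarith [mul_pos (div_pos h4T hT) hTexp]
  have hexpand2 : ((∫ ρ in Ioo 0 1, Real.sinh ρ ^ (c - 1)) + (4:ℝ) ^ |c - 1| / T)
      * Real.exp (T * r)
      = (∫ ρ in Ioo 0 1, Real.sinh ρ ^ (c-1)) * Real.exp (T * r)
        + ((4:ℝ) ^ |c-1| / T) * Real.exp (T*r) := by ring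
  rw [hexpand2]
  linarith [hmono, key1, key2]

lemma combine {q p' x y ux uy δ : ℝ} (hq : q < 0) (hp' : p' < 0)
    (hx : 0 < x) (hy : 0 < y) (hux : x ≤ ux) (huy : y ≤ uy)
    (hδ : δ ≤ ux ^ (1/q) * uy ^ (1/p')) : δ ≤ x ^ (1/q) * y ^ (1/p') := by
  have h1 : ux ^ (1/q) ≤ x ^ (1/q) :=
    Real.rpow_le_rpow_of_nonpos hx hux (le_of_lt (div_neg_of_pos_of_neg one_pos hq))
  have h2 : uy ^ (1/p') ≤ y ^ (1/p') :=
    Real.rpow_le_rpow_of_nonpos hy huy (le_of_lt (div_neg_of_pos_of_neg one_pos hp'))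
  calc δ ≤ ux ^ (1/q) * uy ^ (1/p') := hδ
    _ ≤ x ^ (1/q) * y ^ (1/p') :=
        mul_le_mul h1 h2 (Real.rpow_nonneg (le_of_lt (lt_of_lt_of_le hy huy)) _)
          (Real.rpow_nonneg hx.le _)

lemma main_bound {q p' s c : ℝ} (hq : q < 0) (hp' : p' < 0)
    (hs : -1 ≤ s) (hs' : s < 0) (hc : 0 < c)
    (hcond : 0 ≤ s/q + (c-1)/p') :
    ∃ δ : ℝ, 0 < δ ∧ ∀ r : ℝ, 0 < r →
      δ ≤ (∫ ρ in Ioi r, Real.sinh ρ ^ s) ^ (1/q) *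
          (∫ ρ in Ioo 0 r, Real.sinh ρ ^ (c-1)) ^ (1/p') := by
  have hq0 : q ≠ 0 := ne_of_lt hq
  have hp'0 : p' ≠ 0 := ne_of_lt hp'
  have hs2 : (-1:ℝ) < c - 1 := by linarith
  set A1 : ℝ := ∫ ρ in Ioi (1:ℝ), Real.sinh ρ ^ s with hA1def
  set B1 : ℝ := ∫ ρ in Ioo (0:ℝ) 1, Real.sinh ρ ^ (c-1) with hB1def
  have hA1pos : 0 < A1 := integral_sinh_rpow_Ioi_pos one_pos hs'
  have hB1pos : 0 < B1 := integral_sinh_rpow_Ioo_pos one_pos hs2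
  set T : ℝ := -s * p' / q with hTdef
  have hT : 0 < T := by
    have h1 : -s * p' < 0 := mul_neg_of_pos_of_neg (by linarith) hp'
    exact div_pos_of_neg_of_neg h1 hq
  have hcT : c - 1 ≤ T := by
    have h1 : -(s/q) ≤ (c-1)/p' := by linarith
    have h2 : c - 1 ≤ -(s/q) * p' := (le_div_iff_of_neg hp').mp h1
    have h3 : -(s/q) * p' = T := by rw [hTdef]; ring
    linarith [h2, h3.le, h3.ge]
  set CA : ℝ := (4:ℝ) ^ (-s) / (-s) with hCAdef
  have hCApos : 0 < CA := by
    apply div_pos (Real.rpow_pos_of_pos (by norm_num) _) (by linarith)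
  set K : ℝ := B1 + (4:ℝ) ^ |c-1| / T with hKdef
  have hKpos : 0 < K := by
    have := Real.rpow_pos_of_pos (show (0:ℝ) < 4 by norm_num) |c-1|
    have := div_pos this hT
    rw [hKdef]
    exact add_pos hB1pos this
  set m : ℝ := -(1/q) with hmdef
  have hm : 0 < m := by
    have : 1/q < 0 := div_neg_of_pos_of_neg one_pos hq
    rw [hmdef]; linarith
  set ε : ℝ := -(c/p') with hεdef
  have hε : 0 < ε := by
    have : c/p' < 0 := div_neg_of_pos_of_neg hc hp'
    rw [hεdef]; linarith
  set E : ℝ := Real.exp |c-1| / c with hEdef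
  have hEpos : 0 < E := div_pos (Real.exp_pos _) hc
  set δ₁ : ℝ := CA ^ (1/q) * K ^ (1/p') with hδ₁def
  set δ₂ : ℝ := (A1+1) ^ (1/q) * E ^ (1/p') * ((1:ℝ) + m/ε) ^ (-m) with hδ₂def
  have hδ₁pos : 0 < δ₁ :=
    mul_pos (Real.rpow_pos_of_pos hCApos _) (Real.rpow_pos_of_pos hKpos _)
  have hδ₂pos : 0 < δ₂ := by
    apply mul_pos (mul_pos (Real.rpow_pos_of_pos (by linarith) _)
      (Real.rpow_pos_of_pos hEpos _))
    apply Real.rpow_pos_of_pos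
    have := div_pos hm hε
    linarith
  refine ⟨min δ₁ δ₂, lt_min hδ₁pos hδ₂pos, ?_⟩
  intro r hr
  have hApos : 0 < ∫ ρ in Ioi r, Real.sinh ρ ^ s := integral_sinh_rpow_Ioi_pos hr hs'
  have hBpos : 0 < ∫ ρ in Ioo 0 r, Real.sinh ρ ^ (c-1) :=
    integral_sinh_rpow_Ioo_pos hr hs2
  rcases le_or_gt r 1 with hr1 | hr1
  · -- small r
    apply combine hq hp' hApos hBpos (A_le_small hs hs' hr hr1) (B_le_small hc hr hr1)
    set u : ℝ := -Real.log r with hudef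
    have hu : 0 ≤ u := by
      have := Real.log_nonpos hr.le hr1
      simp only [hudef]; linarith
    have h1u : (0:ℝ) < 1 + u := by linarith
    have e1 : ((A1 + 1) * (1 - Real.log r)) ^ (1/q)
        = (A1+1) ^ (1/q) * ((1:ℝ)+u) ^ (-m) := by
      rw [show (1:ℝ) - Real.log r = 1 + u by rw [hudef]; ring,
        Real.mul_rpow (by linarith) h1u.le, show (1:ℝ)/q = -m by rw [hmdef]; ring]
    have e2 : (E * r ^ c) ^ (1/p') = E ^ (1/p') * Real.exp (ε * u) := by
      rw [Real.mul_rpow hEpos.le (Real.rpow_pos_of_pos hr c).le]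
      congr 1
      rw [← Real.rpow_mul hr.le, Real.rpow_def_of_pos hr]
      congr 1
      rw [hεdef, hudef]
      ring
    rw [e1, e2]
    have hkey : ((1:ℝ) + m/ε) ^ (-m) ≤ ((1:ℝ)+u) ^ (-m) * Real.exp (ε * u) :=
      key_ineq hm hε hu
    have hcoef : 0 ≤ (A1+1) ^ (1/q) * E ^ (1/p') :=
      mul_nonneg (Real.rpow_nonneg (by linarith) _) (Real.rpow_nonneg hEpos.le _)
    calc min δ₁ δ₂ ≤ δ₂ := min_le_right _ _
      _ = (A1+1) ^ (1/q) * E ^ (1/p') * ((1:ℝ) + m/ε) ^ (-m) := hδ₂def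
      _ ≤ (A1+1) ^ (1/q) * E ^ (1/p') * (((1:ℝ)+u) ^ (-m) * Real.exp (ε * u)) :=
          mul_le_mul_of_nonneg_left hkey hcoef
      _ = (A1+1) ^ (1/q) * ((1:ℝ)+u) ^ (-m) * (E ^ (1/p') * Real.exp (ε * u)) := by
          ring
  · -- large r
    have hr1' : (1:ℝ) ≤ r := hr1.le
    apply combine hq hp' hApos hBpos (A_le_large hs' hr1') (B_le_large hc hT hcT hr1')
    have e1 : (CA * Real.exp (s * r)) ^ (1/q)
        = CA ^ (1/q) * Real.exp (s * r * (1/q)) := by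
      rw [Real.mul_rpow hCApos.le (Real.exp_pos _).le, ← Real.exp_mul]
    have e2 : (K * Real.exp (T * r)) ^ (1/p')
        = K ^ (1/p') * Real.exp (T * r * (1/p')) := by
      rw [Real.mul_rpow hKpos.le (Real.exp_pos _).le, ← Real.exp_mul]
    rw [e1, e2]
    have hzero : s * r * (1/q) + T * r * (1/p') = 0 := by
      have hTp' : s/q + T/p' = 0 := by
        rw [hTdef]
        field_simp
        ring
      linear_combination r * hTp'
    calc min δ₁ δ₂ ≤ δ₁ := min_le_left _ _
      _ = CA ^ (1/q) * K ^ (1/p') := hδ₁def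
      _ = CA ^ (1/q) * K ^ (1/p')
          * (Real.exp (s * r * (1/q)) * Real.exp (T * r * (1/p'))) := by
          rw [← Real.exp_add, hzero, Real.exp_zero, mul_one]
      _ = CA ^ (1/q) * Real.exp (s * r * (1/q))
          * (K ^ (1/p') * Real.exp (T * r * (1/p'))) := by ring

end HyperbolicHardyAux

/-- Positivity of the Hardy quantity `D₁` for the hyperbolic weights: the infimum
over `r > 0` of `(∫_r^∞ (sinh ρ)^{α+n-1} dρ)^{1/q} (∫_0^r (sinh ρ)^{β(1-p')+n-1} dρ)^{1/p'}`
is strictly positive. -/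
theorem hyperbolic_hardy_infimum_pos
    (n : ℕ) (hn : 2 ≤ n)
    (p q p' : ℝ) (hp : p ∈ Set.Ioo (0:ℝ) 1) (hq : q < 0) (hp' : p' = p / (p - 1))
    (α β : ℝ)
    (hα₀ : 0 ≤ α + n) (hα₁ : α + n < 1) (hβ : β * (1 - p') + n > 0)
    (hcond : (α + n) / q + (β * (1 - p') + n) / p' ≥ 1 / q + 1 / p') :
    0 < sInf ((fun r : ℝ =>
      (∫ ρ in Set.Ioi r, Real.sinh ρ ^ (α + n - 1)) ^ (1 / q) *
        (∫ ρ in Set.Ioo 0 r, Real.sinh ρ ^ (β * (1 - p') + n - 1)) ^ (1 / p'))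
      '' Set.Ioi (0:ℝ)) := by
  obtain ⟨hp0, hp1⟩ := hp
  have hp'neg : p' < 0 := by
    rw [hp']
    exact div_neg_of_pos_of_neg hp0 (by linarith)
  have hq0 : q ≠ 0 := ne_of_lt hq
  have hp'0 : p' ≠ 0 := ne_of_lt hp'neg
  have hs : (-1:ℝ) ≤ α + n - 1 := by linarith
  have hs' : α + n - 1 < 0 := by linarith
  have hc : (0:ℝ) < β * (1 - p') + n := hβ
  have hcond' : 0 ≤ (α + n - 1)/q + ((β * (1 - p') + n) - 1)/p' := by
    have e1 : (α + (n:ℝ) - 1)/q = (α + n)/q - 1/q := by ring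
    have e2 : ((β * (1 - p') + (n:ℝ)) - 1)/p' = (β * (1 - p') + n)/p' - 1/p' := by ring
    rw [e1, e2]
    linarith [hcond]
  obtain ⟨δ, hδpos, hδ⟩ :=
    HyperbolicHardyAux.main_bound hq hp'neg hs hs' hc hcond'
  refine lt_of_lt_of_le hδpos (le_csInf ?_ ?_)
  · exact ⟨_, Set.mem_image_of_mem _ (Set.mem_Ioi.mpr one_pos)⟩
  · rintro b ⟨r, hr, rfl⟩
    exact hδ r (Set.mem_Ioi.mp hr)
end

section
/- Let n ≥ 2, p ∈ (0,1), q < 0, p' = p/(p-1), and α, β ∈ ℝ satisfy α + n > 0, 0 ≤ β(1-p') + n < 1, and (α+n)/q + (β(1-p')+n)/p' ≥ 1/q + 1/p'. Then the infimum over r > 0 of (∫_0^r (sinh ρ)^{α+n-1} dρ)^{1/q} · (∫_r^∞ (sinh ρ)^{β(1-p')+n-1} dρ)^{1/p'} is strictly positive. (Note that α + n > 0 makes the first integral finite and β(1-p') + n < 1 makes the second integral finite, and both integrals are strictly positive, so each factor is a positive real raised to a negative power.) -/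
/-!
Put `A = α + n - 1`, `E = β (1 - p') + n - 1 ∈ [-1, 0)`, `F r = ∫₀^r sinh^A` and
`G r = ∫_r^∞ sinh^E`. As `1/q` and `1/p'` are negative, it suffices to bound `F^a G^b` from above,
where `a = -1/q > 0` and `b = -1/p' > 0`; the hypothesis on `α, β` says `a A + b E ≤ 0`.

For `r ≤ 1`, `sinh ρ ≍ ρ` gives `F r ≲ r^(A+1)` and, since `E ≥ -1`, `G r ≲ r^(-ε)` for every
`ε > 0`; with `ε = a (A + 1) / b` the two powers of `r` cancel.
For `r ≥ 1`, `sinh ρ ≍ e^ρ` gives `G r ≲ e^(E r)` and `F r ≲ e^(A' r)` for any positive `A' ≥ A`;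
`A' = max A (-b E / a)` keeps `a A' + b E ≤ 0`, so the product stays bounded.
-/

open MeasureTheory Set Real

lemma rpow_le_max_mul_rpow {x y c d A : ℝ} (hc : 0 < c) (hx : 0 < x) (hcy : c * x ≤ y)
    (hyd : y ≤ d * x) : y ^ A ≤ max (c ^ A) (d ^ A) * x ^ A := by
  have hcx : 0 < c * x := mul_pos hc hx
  have hd : 0 < d := pos_of_mul_pos_left (hcx.trans_le (hcy.trans hyd)) hx.le
  rcases le_total 0 A with hA | hA
  · calc y ^ A ≤ (d * x) ^ A := rpow_le_rpow (hcx.le.trans hcy) hyd hA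
      _ = d ^ A * x ^ A := mul_rpow hd.le hx.le
      _ ≤ _ := by gcongr; exact le_max_right _ _
  · calc y ^ A ≤ (c * x) ^ A := rpow_le_rpow_of_nonpos hcx hcy hA
      _ = c ^ A * x ^ A := mul_rpow hc.le hx.le
      _ ≤ _ := by gcongr; exact le_max_left _ _

lemma Real.sinh_le_mul_exp (x : ℝ) : sinh x ≤ x * exp x := by
  have h : exp (-x) = exp (-(2 * x)) * exp x := by rw [← exp_add]; ring_nf
  rw [sinh_eq, h]
  nlinarith [add_one_le_exp (-(2 * x)), exp_pos x]

lemma Real.sinh_le_exp (x : ℝ) : sinh x ≤ exp x := by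
  rw [sinh_eq]
  nlinarith [exp_pos (-x), exp_pos x]

lemma Real.inv_four_mul_exp_le_sinh {x : ℝ} (hx : 1 ≤ x) : 4⁻¹ * exp x ≤ sinh x := by
  have h : exp x = exp (2 * x) * exp (-x) := by rw [← exp_add]; ring_nf
  rw [sinh_eq]
  nlinarith [add_one_le_exp (2 * x), exp_pos (-x)]

lemma sinh_rpow_le_of_le_one (A : ℝ) {x : ℝ} (hx₀ : 0 < x) (hx₁ : x ≤ 1) :
    sinh x ^ A ≤ max 1 (exp A) * x ^ A := by
  have hlow : 1 * x ≤ sinh x := by simpa using self_le_sinh_iff.2 hx₀.le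
  have hup : sinh x ≤ exp 1 * x := (sinh_le_mul_exp x).trans (by rw [mul_comm]; gcongr)
  have h := rpow_le_max_mul_rpow (A := A) one_pos hx₀ hlow hup
  rwa [one_rpow, ← exp_mul, one_mul] at h

lemma sinh_rpow_le_of_one_le (A : ℝ) {x : ℝ} (hx : 1 ≤ x) :
    sinh x ^ A ≤ max (4⁻¹ ^ A) 1 * exp (A * x) := by
  have hup : sinh x ≤ 1 * exp x := by simpa using sinh_le_exp x
  have h := rpow_le_max_mul_rpow (A := A) (by norm_num) (exp_pos x)
    (inv_four_mul_exp_le_sinh hx) hup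
  rwa [one_rpow, ← exp_mul, mul_comm x] at h

lemma continuousOn_sinh_rpow (A : ℝ) : ContinuousOn (fun ρ ↦ sinh ρ ^ A) (Ioi 0) :=
  fun _ hx ↦ (continuous_sinh.continuousAt.rpow_const
    (Or.inl (sinh_pos_iff.2 hx).ne')).continuousWithinAt

lemma integrableOn_sinh_rpow_Icc (A : ℝ) {a b : ℝ} (ha : 0 < a) :
    IntegrableOn (fun ρ ↦ sinh ρ ^ A) (Icc a b) :=
  ((continuousOn_sinh_rpow A).mono fun _ hx ↦ ha.trans_le hx.1).integrableOn_compact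
    isCompact_Icc

lemma setIntegral_pos_of_forall_pos {X : Type*} [MeasurableSpace X] {μ : Measure X} {f : X → ℝ}
    {s : Set X} (hs : MeasurableSet s) (hμs : 0 < μ s) (hf : IntegrableOn f s μ)
    (hpos : ∀ x ∈ s, 0 < f x) : 0 < ∫ x in s, f x ∂μ := by
  rw [setIntegral_pos_iff_support_of_nonneg_ae ?_ hf]
  · exact hμs.trans_le (measure_mono fun x hx ↦ ⟨(hpos x hx).ne', hx⟩)
  · filter_upwards [ae_restrict_mem hs] with x hx using (hpos x hx).le

lemma integrableOn_sinh_rpow_Ioo {A : ℝ} (hA : -1 < A) (r : ℝ) :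
    IntegrableOn (fun ρ ↦ sinh ρ ^ A) (Ioo 0 r) := by
  have hsmall : IntegrableOn (fun ρ ↦ sinh ρ ^ A) (Ioo 0 1) := by
    refine (((intervalIntegral.integrableOn_Ioo_rpow_iff one_pos).2 hA).const_mul
      (max 1 (exp A))).mono'
      ((continuousOn_sinh_rpow A).mono Ioo_subset_Ioi_self |>.aestronglyMeasurable
        measurableSet_Ioo) ?_
    filter_upwards [ae_restrict_mem measurableSet_Ioo] with x hx
    rw [norm_of_nonneg (rpow_nonneg (sinh_pos_iff.2 hx.1).le A)]
    exact sinh_rpow_le_of_le_one A hx.1 hx.2.le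
  refine (hsmall.union (integrableOn_sinh_rpow_Icc A one_pos (b := r))).mono_set fun x hx ↦ ?_
  rcases lt_or_ge x 1 with h | h
  exacts [Or.inl ⟨hx.1, h⟩, Or.inr ⟨h, hx.2.le⟩]

lemma integrableOn_sinh_rpow_Ioi {E : ℝ} (hE : E < 0) {r : ℝ} (hr : 0 < r) :
    IntegrableOn (fun ρ ↦ sinh ρ ^ E) (Ioi r) := by
  have hlarge : IntegrableOn (fun ρ ↦ sinh ρ ^ E) (Ioi 1) := by
    refine ((integrableOn_exp_mul_Ioi hE 1).const_mul (max (4⁻¹ ^ E) 1)).mono'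
      ((continuousOn_sinh_rpow E).mono (Ioi_subset_Ioi zero_le_one) |>.aestronglyMeasurable
        measurableSet_Ioi) ?_
    filter_upwards [ae_restrict_mem measurableSet_Ioi] with x hx
    rw [norm_of_nonneg (rpow_nonneg (sinh_pos_iff.2 (one_pos.trans hx)).le E)]
    exact sinh_rpow_le_of_one_le E hx.le
  refine ((integrableOn_sinh_rpow_Icc E hr (b := 1)).union hlarge).mono_set fun x hx ↦ ?_
  rcases le_or_gt x 1 with h | h
  exacts [Or.inl ⟨le_of_lt hx, h⟩, Or.inr h]

lemma integral_sinh_rpow_Ioo_pos {A : ℝ} (hA : -1 < A) {r : ℝ} (hr : 0 < r) :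
    0 < ∫ ρ in Ioo 0 r, sinh ρ ^ A :=
  setIntegral_pos_of_forall_pos measurableSet_Ioo (by simpa using hr)
    (integrableOn_sinh_rpow_Ioo hA r) fun _ hx ↦ rpow_pos_of_pos (sinh_pos_iff.2 hx.1) A

lemma integral_sinh_rpow_Ioi_pos {E : ℝ} (hE : E < 0) {r : ℝ} (hr : 0 < r) :
    0 < ∫ ρ in Ioi r, sinh ρ ^ E :=
  setIntegral_pos_of_forall_pos measurableSet_Ioi (by simp) (integrableOn_sinh_rpow_Ioi hE hr)
    fun _ hx ↦ rpow_pos_of_pos (sinh_pos_iff.2 (hr.trans hx)) E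

lemma integral_sinh_rpow_Ioo_le_of_le_one {A : ℝ} (hA : -1 < A) {r : ℝ} (hr₀ : 0 < r)
    (hr₁ : r ≤ 1) : ∫ ρ in Ioo 0 r, sinh ρ ^ A ≤ max 1 (exp A) / (A + 1) * r ^ (A + 1) := by
  calc ∫ ρ in Ioo 0 r, sinh ρ ^ A ≤ ∫ x in Ioo 0 r, max 1 (exp A) * x ^ A :=
        setIntegral_mono_on (integrableOn_sinh_rpow_Ioo hA r)
          (((intervalIntegral.integrableOn_Ioo_rpow_iff hr₀).2 hA).const_mul _)
          measurableSet_Ioo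
          fun x hx ↦ sinh_rpow_le_of_le_one A hx.1 (hx.2.le.trans hr₁)
    _ = max 1 (exp A) / (A + 1) * r ^ (A + 1) := by
      rw [integral_const_mul, ← integral_Ioc_eq_integral_Ioo,
        ← intervalIntegral.integral_of_le hr₀.le, integral_rpow (Or.inl hA),
        zero_rpow (by linarith), sub_zero]
      ring

lemma integral_sinh_rpow_Ioi_le_of_le_one {E ε : ℝ} (hE : E < 0) (hε : 0 < ε)
    (hεE : -1 - ε ≤ E) {r : ℝ} (hr₀ : 0 < r) (hr₁ : r ≤ 1) :
    ∫ ρ in Ioi r, sinh ρ ^ E ≤ (ε⁻¹ + ∫ ρ in Ioi 1, sinh ρ ^ E) * r ^ (-ε) := by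
  have hrε : 1 ≤ r ^ (-ε) := one_le_rpow_of_pos_of_le_one_of_nonpos hr₀ hr₁ (by linarith)
  have hzero : (0 : ℝ) ∉ uIcc r 1 := by rw [uIcc_of_le hr₁]; exact fun h ↦ hr₀.not_ge h.1
  have hpointwise : ∀ x ∈ Ioc r 1, sinh x ^ E ≤ x ^ (-1 - ε) := fun x hx ↦ by
    have hx₀ := hr₀.trans hx.1
    calc sinh x ^ E ≤ x ^ E := rpow_le_rpow_of_nonpos hx₀ (self_le_sinh_iff.2 hx₀.le) hE.le
      _ ≤ x ^ (-1 - ε) := rpow_le_rpow_of_exponent_ge hx₀ hx.2 hεE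
  have hnear : ∫ ρ in Ioc r 1, sinh ρ ^ E ≤ ε⁻¹ * r ^ (-ε) := by
    calc ∫ ρ in Ioc r 1, sinh ρ ^ E ≤ ∫ x in Ioc r 1, x ^ (-1 - ε) :=
          setIntegral_mono_on ((integrableOn_sinh_rpow_Ioi hE hr₀).mono_set Ioc_subset_Ioi_self)
            ((intervalIntegrable_iff_integrableOn_Ioc_of_le hr₁).1
              (intervalIntegral.intervalIntegrable_rpow (Or.inr hzero))) measurableSet_Ioc
            hpointwise
      _ = ε⁻¹ * (r ^ (-ε) - 1) := by
        rw [← intervalIntegral.integral_of_le hr₁, integral_rpow (Or.inr ⟨by linarith, hzero⟩),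
          show -1 - ε + 1 = -ε by ring, one_rpow, div_neg, ← neg_div, neg_sub, div_eq_inv_mul]
      _ ≤ ε⁻¹ * r ^ (-ε) := by gcongr; linarith
  have hfar : ∫ ρ in Ioi 1, sinh ρ ^ E ≤ (∫ ρ in Ioi 1, sinh ρ ^ E) * r ^ (-ε) :=
    le_mul_of_one_le_right (integral_sinh_rpow_Ioi_pos hE one_pos).le hrε
  rw [← Ioc_union_Ioi_eq_Ioi hr₁, setIntegral_union (Ioc_disjoint_Ioi le_rfl) measurableSet_Ioi
    ((integrableOn_sinh_rpow_Ioi hE hr₀).mono_set Ioc_subset_Ioi_self)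
    (integrableOn_sinh_rpow_Ioi hE one_pos)]
  linarith

lemma integral_sinh_rpow_Ioo_le_of_one_le {A A' : ℝ} (hA : -1 < A) (hAA' : A ≤ A') (hA' : 0 < A')
    {r : ℝ} (hr : 1 ≤ r) :
    ∫ ρ in Ioo 0 r, sinh ρ ^ A ≤
      ((∫ ρ in Ioo 0 1, sinh ρ ^ A) + max (4⁻¹ ^ A) 1 / A') * exp (A' * r) := by
  set K : ℝ := max (4⁻¹ ^ A) 1
  have hexp : 1 ≤ exp (A' * r) := one_le_exp (by positivity)
  have hfar : ∫ ρ in Ico 1 r, sinh ρ ^ A ≤ K / A' * exp (A' * r) := by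
    have hint : IntegrableOn (fun x ↦ K * exp (A' * x)) (Iic r) :=
      (integrableOn_exp_mul_Iic hA' r).const_mul K
    calc ∫ ρ in Ico 1 r, sinh ρ ^ A ≤ ∫ x in Ico 1 r, K * exp (A' * x) :=
          setIntegral_mono_on ((integrableOn_sinh_rpow_Icc A one_pos).mono_set Ico_subset_Icc_self)
            (hint.mono_set fun x hx ↦ hx.2.le) measurableSet_Ico fun x hx ↦
              (sinh_rpow_le_of_one_le A hx.1).trans (by gcongr; nlinarith [hx.1])
      _ ≤ ∫ x in Iic r, K * exp (A' * x) :=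
          setIntegral_mono_set hint (.of_forall fun x ↦ by positivity)
            (.of_forall fun x hx ↦ hx.2.le)
      _ = K / A' * exp (A' * r) := by
          rw [integral_const_mul, integral_exp_mul_Iic hA']; ring
  have hnear : ∫ ρ in Ioo 0 1, sinh ρ ^ A ≤ (∫ ρ in Ioo 0 1, sinh ρ ^ A) * exp (A' * r) :=
    le_mul_of_one_le_right (integral_sinh_rpow_Ioo_pos hA one_pos).le hexp
  rw [← Ioo_union_Ico_eq_Ioo one_pos hr, setIntegral_union
    ((Iio_disjoint_Ici le_rfl).mono Ioo_subset_Iio_self Ico_subset_Ici_self) measurableSet_Ico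
    (integrableOn_sinh_rpow_Ioo hA 1)
    ((integrableOn_sinh_rpow_Icc A one_pos).mono_set Ico_subset_Icc_self)]
  linarith

lemma integral_sinh_rpow_Ioi_le_of_one_le {E : ℝ} (hE : E < 0) {r : ℝ} (hr : 1 ≤ r) :
    ∫ ρ in Ioi r, sinh ρ ^ E ≤ max (4⁻¹ ^ E) 1 / (-E) * exp (E * r) := by
  calc ∫ ρ in Ioi r, sinh ρ ^ E ≤ ∫ x in Ioi r, max (4⁻¹ ^ E) 1 * exp (E * x) :=
        setIntegral_mono_on (integrableOn_sinh_rpow_Ioi hE (one_pos.trans_le hr))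
          ((integrableOn_exp_mul_Ioi hE r).const_mul _) measurableSet_Ioi
          fun x hx ↦ sinh_rpow_le_of_one_le E (hr.trans hx.le)
    _ = max (4⁻¹ ^ E) 1 / (-E) * exp (E * r) := by
        rw [integral_const_mul, integral_exp_mul_Ioi hE]; ring

section Bounds

variable {A E a b : ℝ}

lemma exists_bound_integral_sinh_rpow_of_le_one (hA : -1 < A) (hE₁ : -1 ≤ E) (hE : E < 0)
    (ha : 0 < a) (hb : 0 < b) : ∃ M, ∀ r ∈ Ioc 0 1,
      (∫ ρ in Ioo 0 r, sinh ρ ^ A) ^ a * (∫ ρ in Ioi r, sinh ρ ^ E) ^ b ≤ M := by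
  set ε := a * (A + 1) / b with hε_def
  have hε : 0 < ε := div_pos (mul_pos ha (by linarith)) hb
  set C₁ := max 1 (exp A) / (A + 1)
  set C₂ := ε⁻¹ + ∫ ρ in Ioi 1, sinh ρ ^ E
  refine ⟨C₁ ^ a * C₂ ^ b, fun r ⟨hr₀, hr₁⟩ ↦ ?_⟩
  have hF := integral_sinh_rpow_Ioo_pos hA hr₀
  have hG := integral_sinh_rpow_Ioi_pos hE hr₀
  have hC₁ : 0 < C₁ := div_pos (one_pos.trans_le (le_max_left _ _)) (by linarith)
  have hC₂ : 0 < C₂ := add_pos (inv_pos.2 hε) (integral_sinh_rpow_Ioi_pos hE one_pos)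
  calc (∫ ρ in Ioo 0 r, sinh ρ ^ A) ^ a * (∫ ρ in Ioi r, sinh ρ ^ E) ^ b
      ≤ (C₁ * r ^ (A + 1)) ^ a * (C₂ * r ^ (-ε)) ^ b := by
        gcongr
        · exact integral_sinh_rpow_Ioo_le_of_le_one hA hr₀ hr₁
        · exact integral_sinh_rpow_Ioi_le_of_le_one hE hε (by linarith) hr₀ hr₁
    _ = C₁ ^ a * C₂ ^ b * r ^ ((A + 1) * a + -ε * b) := by
        rw [mul_rpow hC₁.le (by positivity), mul_rpow hC₂.le (by positivity), ← rpow_mul hr₀.le,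
          ← rpow_mul hr₀.le, rpow_add hr₀]
        ring
    _ = C₁ ^ a * C₂ ^ b := by
        rw [show (A + 1) * a + -ε * b = 0 by rw [hε_def]; field_simp; ring, rpow_zero, mul_one]

lemma exists_bound_integral_sinh_rpow_of_one_le (hA : -1 < A) (hE : E < 0) (ha : 0 < a)
    (hb : 0 < b) (hAE : a * A + b * E ≤ 0) : ∃ M, ∀ r, 1 ≤ r →
      (∫ ρ in Ioo 0 r, sinh ρ ^ A) ^ a * (∫ ρ in Ioi r, sinh ρ ^ E) ^ b ≤ M := by
  set A' := max A (b * -E / a) with hA'_def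
  have hA' : 0 < A' := lt_max_of_lt_right (by have := neg_pos.2 hE; positivity)
  have hA'E : a * A' + b * E ≤ 0 := by
    have h : a * A' ≤ -(b * E) := by
      rw [hA'_def, mul_max_of_nonneg _ _ ha.le, mul_div_cancel₀ _ ha.ne']
      exact max_le (by linarith) (by linarith)
    linarith
  set K₁ := (∫ ρ in Ioo 0 1, sinh ρ ^ A) + max (4⁻¹ ^ A) 1 / A'
  set K₂ := max (4⁻¹ ^ E) 1 / (-E)
  refine ⟨K₁ ^ a * K₂ ^ b, fun r hr ↦ ?_⟩
  have hr₀ : 0 < r := one_pos.trans_le hr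
  have hF := integral_sinh_rpow_Ioo_pos hA hr₀
  have hG := integral_sinh_rpow_Ioi_pos hE hr₀
  have hK₁ : 0 < K₁ := add_pos (integral_sinh_rpow_Ioo_pos hA one_pos)
    (div_pos (one_pos.trans_le (le_max_right _ _)) hA')
  have hK₂ : 0 < K₂ := div_pos (one_pos.trans_le (le_max_right _ _)) (neg_pos.2 hE)
  calc (∫ ρ in Ioo 0 r, sinh ρ ^ A) ^ a * (∫ ρ in Ioi r, sinh ρ ^ E) ^ b
      ≤ (K₁ * exp (A' * r)) ^ a * (K₂ * exp (E * r)) ^ b := by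
        gcongr
        · exact integral_sinh_rpow_Ioo_le_of_one_le hA (le_max_left _ _) hA' hr
        · exact integral_sinh_rpow_Ioi_le_of_one_le hE hr
    _ = K₁ ^ a * K₂ ^ b * exp ((a * A' + b * E) * r) := by
        rw [mul_rpow hK₁.le (exp_pos _).le, mul_rpow hK₂.le (exp_pos _).le, ← exp_mul, ← exp_mul,
          show (a * A' + b * E) * r = A' * r * a + E * r * b by ring, exp_add]
        ring
    _ ≤ K₁ ^ a * K₂ ^ b := by
        refine mul_le_of_le_one_right (by positivity) (exp_le_one_iff.2 ?_)
        exact mul_nonpos_of_nonpos_of_nonneg hA'E hr₀.le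

lemma exists_pos_le_integral_sinh_rpow_mul (hA : -1 < A) (hE₁ : -1 ≤ E) (hE : E < 0)
    {s t : ℝ} (hs : s < 0) (ht : t < 0) (hAE : 0 ≤ s * A + t * E) : ∃ m > 0, ∀ r, 0 < r →
      m ≤ (∫ ρ in Ioo 0 r, sinh ρ ^ A) ^ s * (∫ ρ in Ioi r, sinh ρ ^ E) ^ t := by
  obtain ⟨M₁, hM₁⟩ := exists_bound_integral_sinh_rpow_of_le_one hA hE₁ hE (neg_pos.2 hs)
    (neg_pos.2 ht)
  obtain ⟨M₂, hM₂⟩ := exists_bound_integral_sinh_rpow_of_one_le hA hE (neg_pos.2 hs)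
    (neg_pos.2 ht) (by linarith)
  have hprod_pos : ∀ r, 0 < r →
      0 < (∫ ρ in Ioo 0 r, sinh ρ ^ A) ^ (-s) * (∫ ρ in Ioi r, sinh ρ ^ E) ^ (-t) := fun r hr ↦
    mul_pos (rpow_pos_of_pos (integral_sinh_rpow_Ioo_pos hA hr) _)
      (rpow_pos_of_pos (integral_sinh_rpow_Ioi_pos hE hr) _)
  have hbound : ∀ r, 0 < r →
      (∫ ρ in Ioo 0 r, sinh ρ ^ A) ^ (-s) * (∫ ρ in Ioi r, sinh ρ ^ E) ^ (-t) ≤ max M₁ M₂ :=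
    fun r hr ↦ (le_total r 1).elim (fun h ↦ (hM₁ r ⟨hr, h⟩).trans (le_max_left _ _))
      (fun h ↦ (hM₂ r h).trans (le_max_right _ _))
  have hM : 0 < max M₁ M₂ := (hprod_pos 1 one_pos).trans_le (hbound 1 one_pos)
  refine ⟨(max M₁ M₂)⁻¹, inv_pos.2 hM, fun r hr ↦ ?_⟩
  have hinv := inv_anti₀ (hprod_pos r hr) (hbound r hr)
  rwa [mul_inv, ← rpow_neg (integral_sinh_rpow_Ioo_pos hA hr).le,
    ← rpow_neg (integral_sinh_rpow_Ioi_pos hE hr).le, neg_neg, neg_neg] at hinv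

end Bounds

theorem hyperbolic_conjugate_hardy_infimum_pos_general
    (n : ℕ)
    (p q p' : ℝ) (hp : p ∈ Set.Ioo (0:ℝ) 1) (hq : q < 0) (hp' : p' = p / (p - 1))
    (α β : ℝ)
    (hα : α + n > 0) (hβ₀ : 0 ≤ β * (1 - p') + n) (hβ₁ : β * (1 - p') + n < 1)
    (hcond : (α + n) / q + (β * (1 - p') + n) / p' ≥ 1 / q + 1 / p') :
    0 < sInf ((fun r : ℝ =>
      (∫ ρ in Set.Ioo 0 r, Real.sinh ρ ^ (α + n - 1)) ^ (1 / q) *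
        (∫ ρ in Set.Ioi r, Real.sinh ρ ^ (β * (1 - p') + n - 1)) ^ (1 / p'))
      '' Set.Ioi (0:ℝ)) := by
  have hp'_neg : p' < 0 := hp' ▸ div_neg_of_pos_of_neg hp.1 (by linarith [hp.2])
  have hbalance : 0 ≤ 1 / q * (α + n - 1) + 1 / p' * (β * (1 - p') + n - 1) := by
    convert sub_nonneg.2 hcond using 1; ring
  obtain ⟨m, hm, hle⟩ := exists_pos_le_integral_sinh_rpow_mul (A := α + n - 1)
    (E := β * (1 - p') + n - 1) (by linarith) (by linarith) (by linarith) (one_div_neg.2 hq)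
    (one_div_neg.2 hp'_neg) hbalance
  exact hm.trans_le (le_csInf (nonempty_Ioi.image _) (forall_mem_image.2 hle))

/-- Positivity of the Hardy quantity `D₂` for the hyperbolic weights: the infimum
over `r > 0` of `(∫_0^r (sinh ρ)^{α+n-1} dρ)^{1/q} (∫_r^∞ (sinh ρ)^{β(1-p')+n-1} dρ)^{1/p'}`
is strictly positive. -/
theorem hyperbolic_conjugate_hardy_infimum_pos
    (n : ℕ) (hn : 2 ≤ n)
    (p q p' : ℝ) (hp : p ∈ Set.Ioo (0:ℝ) 1) (hq : q < 0) (hp' : p' = p / (p - 1))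
    (α β : ℝ)
    (hα : α + n > 0) (hβ₀ : 0 ≤ β * (1 - p') + n) (hβ₁ : β * (1 - p') + n < 1)
    (hcond : (α + n) / q + (β * (1 - p') + n) / p' ≥ 1 / q + 1 / p') :
    0 < sInf ((fun r : ℝ =>
      (∫ ρ in Set.Ioo 0 r, Real.sinh ρ ^ (α + n - 1)) ^ (1 / q) *
        (∫ ρ in Set.Ioi r, Real.sinh ρ ^ (β * (1 - p') + n - 1)) ^ (1 / p'))
      '' Set.Ioi (0:ℝ)) :=
  hyperbolic_conjugate_hardy_infimum_pos_general n p q p' hp hq hp' α β hα hβ₀ hβ₁ hcond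
end
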